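/- Let {L_j}_{j≤n} be normal modal logics with pairwise disjoint signatures, each characterized by a class of Kripke frames. If every L_j has the finite model property (every formula not in L_j fails in some finite Kripke model of L_j), then the fusion ⊗_{j≤n} L_j also has the finite model property. -/

import Mathlib

/- ### μ-calculus: syntax and Kripke semantics -/

/-- μ-formulas over a modal signature `Λ`, with propositional symbols and
variables indexed by `ℕ`; negation applies to propositional symbols only. -/
inductive MuForm (Λ : Type) : Type where
  | prop : ℕ → MuForm Λ
  | nprop : ℕ → MuForm Λ
  | var : ℕ → MuForm Λ
  | and : MuForm Λ → MuForm Λ → MuForm Λ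
  | or : MuForm Λ → MuForm Λ → MuForm Λ
  | box : Λ → MuForm Λ → MuForm Λ
  | dia : Λ → MuForm Λ → MuForm Λ
  | mu : ℕ → MuForm Λ → MuForm Λ
  | nu : ℕ → MuForm Λ → MuForm Λ

/-- A Kripke model over signature `Λ` with set of worlds `W`. -/
structure KModel (Λ W : Type) where
  R : Λ → W → W → Prop
  V : ℕ → Set W

namespace MuForm

variable {Λ W : Type}

/-- The valuation `‖φ‖^M` of a μ-formula, where `env` interprets the variables;
least and greatest fixed points are taken in the complete lattice `Set W`. -/
def sem (M : KModel Λ W) (env : ℕ → Set W) : MuForm Λ → Set W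
  | prop p => M.V p
  | nprop p => (M.V p)ᶜ
  | var x => env x
  | and a b => sem M env a ∩ sem M env b
  | or a b => sem M env a ∪ sem M env b
  | box i a => {w | ∀ v, M.R i w v → v ∈ sem M env a}
  | dia i a => {w | ∃ v, M.R i w v ∧ v ∈ sem M env a}
  | mu x a => sInf {A : Set W | sem M (Function.update env x A) a ⊆ A}
  | nu x a => sSup {A : Set W | A ⊆ sem M (Function.update env x A) a}

/-- Free variables of a μ-formula. -/
def freeVars : MuForm Λ → Set ℕ
  | prop _ => ∅
  | nprop _ => ∅
  | var x => {x}
  | and a b => freeVars a ∪ freeVars b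
  | or a b => freeVars a ∪ freeVars b
  | box _ a => freeVars a
  | dia _ a => freeVars a
  | mu x a => freeVars a \ {x}
  | nu x a => freeVars a \ {x}

/-- A μ-formula contains no fixed-point operators. -/
def noFix : MuForm Λ → Prop
  | prop _ => True
  | nprop _ => True
  | var _ => True
  | and a b => noFix a ∧ noFix b
  | or a b => noFix a ∧ noFix b
  | box _ a => noFix a
  | dia _ a => noFix a
  | mu _ _ => False
  | nu _ _ => False

/-- The list of subformulas of a μ-formula. -/
def subfs : MuForm Λ → List (MuForm Λ)
  | prop p => [prop p]
  | nprop p => [nprop p]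
  | var x => [var x]
  | and a b => (and a b) :: (subfs a ++ subfs b)
  | or a b => (or a b) :: (subfs a ++ subfs b)
  | box i a => (box i a) :: subfs a
  | dia i a => (dia i a) :: subfs a
  | mu x a => (mu x a) :: subfs a
  | nu x a => (nu x a) :: subfs a

/-- Substitution of `ψ` for the free occurrences of the variable `X`. -/
def subst (X : ℕ) (ψ : MuForm Λ) : MuForm Λ → MuForm Λ
  | prop p => prop p
  | nprop p => nprop p
  | var y => if y = X then ψ else var y
  | and a b => and (subst X ψ a) (subst X ψ b)
  | or a b => or (subst X ψ a) (subst X ψ b)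
  | box i a => box i (subst X ψ a)
  | dia i a => dia i (subst X ψ a)
  | mu y a => if y = X then mu y a else mu y (subst X ψ a)
  | nu y a => if y = X then nu y a else nu y (subst X ψ a)

/-- The substitution of `ψ` for `X` is capture-free: no free variable of `ψ`
becomes bound when substituting `ψ` for the free occurrences of `X`. -/
def CaptureFree (X : ℕ) (ψ : MuForm Λ) : MuForm Λ → Prop
  | prop _ => True
  | nprop _ => True
  | var _ => True
  | and a b => CaptureFree X ψ a ∧ CaptureFree X ψ b
  | or a b => CaptureFree X ψ a ∧ CaptureFree X ψ b
  | box _ a => CaptureFree X ψ a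
  | dia _ a => CaptureFree X ψ a
  | mu y a => y = X ∨ ((X ∈ freeVars a → y ∉ freeVars ψ) ∧ CaptureFree X ψ a)
  | nu y a => y = X ∨ ((X ∈ freeVars a → y ∉ freeVars ψ) ∧ CaptureFree X ψ a)

/-- Number of occurrences of the variable `X`. -/
def varCnt (X : ℕ) : MuForm Λ → ℕ
  | prop _ => 0
  | nprop _ => 0
  | var y => if y = X then 1 else 0
  | and a b => varCnt X a + varCnt X b
  | or a b => varCnt X a + varCnt X b
  | box _ a => varCnt X a
  | dia _ a => varCnt X a
  | mu _ a => varCnt X a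
  | nu _ a => varCnt X a

/-- Number of fixed-point binders binding the variable `X`. -/
def bndCnt (X : ℕ) : MuForm Λ → ℕ
  | prop _ => 0
  | nprop _ => 0
  | var _ => 0
  | and a b => bndCnt X a + bndCnt X b
  | or a b => bndCnt X a + bndCnt X b
  | box _ a => bndCnt X a
  | dia _ a => bndCnt X a
  | mu y a => (if y = X then 1 else 0) + bndCnt X a
  | nu y a => (if y = X then 1 else 0) + bndCnt X a

end MuForm

/-- Each variable has at most one occurrence, is bound by at most one
fixed-point operator, and no variable occurs free. -/
def WellNamed {Λ : Type} (φ : MuForm Λ) : Prop :=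
  (∀ X : ℕ, MuForm.varCnt X φ ≤ 1 ∧ MuForm.bndCnt X φ ≤ 1) ∧ MuForm.freeVars φ = ∅

/- ### The alternation hierarchy Σ^μ_n / Π^μ_n -/

mutual
  /-- The class `Σ^μ_n` of the alternation hierarchy. -/
  inductive SigmaMu {Λ : Type} : ℕ → MuForm Λ → Prop where
    | base {φ : MuForm Λ} : φ.noFix → SigmaMu 0 φ
    | upS {n : ℕ} {φ : MuForm Λ} : SigmaMu n φ → SigmaMu (n + 1) φ
    | upP {n : ℕ} {φ : MuForm Λ} : PiMu n φ → SigmaMu (n + 1) φ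
    | andI {n : ℕ} {a b : MuForm Λ} :
        SigmaMu (n + 1) a → SigmaMu (n + 1) b → SigmaMu (n + 1) (MuForm.and a b)
    | orI {n : ℕ} {a b : MuForm Λ} :
        SigmaMu (n + 1) a → SigmaMu (n + 1) b → SigmaMu (n + 1) (MuForm.or a b)
    | boxI {n : ℕ} {i : Λ} {a : MuForm Λ} :
        SigmaMu (n + 1) a → SigmaMu (n + 1) (MuForm.box i a)
    | diaI {n : ℕ} {i : Λ} {a : MuForm Λ} :
        SigmaMu (n + 1) a → SigmaMu (n + 1) (MuForm.dia i a)
    | muI {n : ℕ} {X : ℕ} {a : MuForm Λ} :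
        SigmaMu (n + 1) a → SigmaMu (n + 1) (MuForm.mu X a)
    | substI {n : ℕ} {X : ℕ} {a ψ : MuForm Λ} :
        SigmaMu (n + 1) a → SigmaMu (n + 1) ψ → MuForm.CaptureFree X ψ a →
        SigmaMu (n + 1) (MuForm.subst X ψ a)

  /-- The class `Π^μ_n` of the alternation hierarchy. -/
  inductive PiMu {Λ : Type} : ℕ → MuForm Λ → Prop where
    | base {φ : MuForm Λ} : φ.noFix → PiMu 0 φ
    | upS {n : ℕ} {φ : MuForm Λ} : SigmaMu n φ → PiMu (n + 1) φ
    | upP {n : ℕ} {φ : MuForm Λ} : PiMu n φ → PiMu (n + 1) φ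
    | andI {n : ℕ} {a b : MuForm Λ} :
        PiMu (n + 1) a → PiMu (n + 1) b → PiMu (n + 1) (MuForm.and a b)
    | orI {n : ℕ} {a b : MuForm Λ} :
        PiMu (n + 1) a → PiMu (n + 1) b → PiMu (n + 1) (MuForm.or a b)
    | boxI {n : ℕ} {i : Λ} {a : MuForm Λ} :
        PiMu (n + 1) a → PiMu (n + 1) (MuForm.box i a)
    | diaI {n : ℕ} {i : Λ} {a : MuForm Λ} :
        PiMu (n + 1) a → PiMu (n + 1) (MuForm.dia i a)
    | nuI {n : ℕ} {X : ℕ} {a : MuForm Λ} :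
        PiMu (n + 1) a → PiMu (n + 1) (MuForm.nu X a)
    | substI {n : ℕ} {X : ℕ} {a ψ : MuForm Λ} :
        PiMu (n + 1) a → PiMu (n + 1) ψ → MuForm.CaptureFree X ψ a →
        PiMu (n + 1) (MuForm.subst X ψ a)
end

/- ### Kripke frames, closure conditions, fusions, equivalence -/

/-- A Kripke frame over the signature `Λ`. -/
structure Frame (Λ : Type) : Type 1 where
  World : Type
  R : Λ → World → World → Prop

/-- Frame isomorphism. -/
def FrameIso {Λ : Type} (F G : Frame Λ) : Prop :=
  ∃ e : F.World ≃ G.World, ∀ (i : Λ) (w v : F.World), F.R i w v ↔ G.R i (e w) (e v)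

/-- A class of frames is closed under isomorphic copies. -/
def ClosedUnderIso {Λ : Type} (C : Set (Frame Λ)) : Prop :=
  ∀ F ∈ C, ∀ G : Frame Λ, FrameIso F G → G ∈ C

/-- Disjoint union of a family of frames. -/
def Frame.disjUnion {Λ ι : Type} (f : ι → Frame Λ) : Frame Λ where
  World := Σ i : ι, (f i).World
  R m x y :=
    ∃ h : x.1 = y.1, (f y.1).R m (cast (congrArg (fun i => (f i).World) h) x.2) y.2

/-- A class of frames is closed under disjoint unions. -/
def ClosedUnderDU {Λ : Type} (C : Set (Frame Λ)) : Prop :=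
  ∀ (ι : Type) (f : ι → Frame Λ), (∀ i, f i ∈ C) → Frame.disjUnion f ∈ C

/-- `∘→∘` is a subframe of the class `C` of unimodal frames. -/
def HasEdge (C : Set (Frame Unit)) : Prop :=
  ∃ F ∈ C, ∃ w0 w1 : F.World, w0 ≠ w1 ∧ F.R () w0 w1

/-- `∘←∘→∘` is a subframe of the class `C` of unimodal frames. -/
def HasFork (C : Set (Frame Unit)) : Prop :=
  ∃ F ∈ C, ∃ w0 w1 w2 : F.World,
    w0 ≠ w1 ∧ w0 ≠ w2 ∧ w1 ≠ w2 ∧ F.R () w0 w1 ∧ F.R () w0 w2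

/-- `∘→∘→∘` is a subframe of the class `C` of unimodal frames. -/
def HasChain2 (C : Set (Frame Unit)) : Prop :=
  ∃ F ∈ C, ∃ w0 w1 w2 : F.World,
    w0 ≠ w1 ∧ w0 ≠ w2 ∧ w1 ≠ w2 ∧ F.R () w0 w1 ∧ F.R () w1 w2

/-- The unimodal reduct of a bimodal frame. -/
def Frame.reduct2 (F : Frame (Fin 2)) (i : Fin 2) : Frame Unit :=
  ⟨F.World, fun _ => F.R i⟩

/-- Fusion of two classes of unimodal frames (signatures `{0}` and `{1}`). -/
def fusion2 (C0 C1 : Set (Frame Unit)) : Set (Frame (Fin 2)) :=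
  {F | F.reduct2 0 ∈ C0 ∧ F.reduct2 1 ∈ C1}

/-- The unimodal reduct of a trimodal frame. -/
def Frame.reduct3 (F : Frame (Fin 3)) (i : Fin 3) : Frame Unit :=
  ⟨F.World, fun _ => F.R i⟩

/-- Fusion of three classes of unimodal frames. -/
def fusion3 (C0 C1 C2 : Set (Frame Unit)) : Set (Frame (Fin 3)) :=
  {F | F.reduct3 0 ∈ C0 ∧ F.reduct3 1 ∈ C1 ∧ F.reduct3 2 ∈ C2}

/-- Two μ-formulas are equivalent over a class of frames: they have the same
valuation in every model based on a frame of the class. -/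
def EquivOver {Λ : Type} (C : Set (Frame Λ)) (φ ψ : MuForm Λ) : Prop :=
  ∀ F ∈ C, ∀ (V : ℕ → Set F.World) (env : ℕ → Set F.World),
    MuForm.sem ⟨F.R, V⟩ env φ = MuForm.sem ⟨F.R, V⟩ env ψ

/- ### Games, strategies, evaluation games, parity games -/

/-- A two-player game on a graph: positions owned by `ownV` belong to
Verifier/∃, the others to Refuter/∀; `winV` decides infinite plays.
A player who cannot move loses. -/
structure Game (Pos : Type) where
  init : Pos
  ownV : Pos → Prop
  move : Pos → Pos → Prop
  winV : (ℕ → Pos) → Prop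

/-- The history (current position first) of an infinite play after `n` steps. -/
def histN {Pos : Type} (p : ℕ → Pos) (n : ℕ) : List Pos :=
  ((List.range (n + 1)).map p).reverse

/-- Finite histories (current position first) of plays in which the player
owning the `own`-positions follows the strategy `σ`. -/
inductive Game.Hist {Pos : Type} (G : Game Pos) (own : Pos → Prop)
    (σ : List Pos → Pos) : List Pos → Prop where
  | init : Game.Hist G own σ [G.init]
  | smove {l : List Pos} {x : Pos} : Game.Hist G own σ (x :: l) → own x →
      G.move x (σ (x :: l)) → Game.Hist G own σ (σ (x :: l) :: x :: l)
  | omove {l : List Pos} {x y : Pos} : Game.Hist G own σ (x :: l) → ¬ own x →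
      G.move x y → Game.Hist G own σ (y :: x :: l)

/-- The player owning the `own`-positions has a winning strategy:
a strategy which always provides a legal move at reachable own positions
(so the player is never stuck) and such that every infinite play following it
satisfies the winning condition `winO`; finite plays in which the opponent is
stuck are automatically won. -/
def Game.WinsFor {Pos : Type} (G : Game Pos) (own : Pos → Prop)
    (winO : (ℕ → Pos) → Prop) : Prop :=
  ∃ σ : List Pos → Pos,
    (∀ (l : List Pos) (x : Pos), G.Hist own σ (x :: l) → own x →
      G.move x (σ (x :: l))) ∧
    (∀ p : ℕ → Pos, p 0 = G.init → (∀ n, G.move (p n) (p (n + 1))) →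
      (∀ n, own (p n) → p (n + 1) = σ (histN p n)) → winO p)

/-- Verifier has a winning strategy. -/
def Game.VWins {Pos : Type} (G : Game Pos) : Prop := G.WinsFor G.ownV G.winV

/-- Refuter has a winning strategy. -/
def Game.RWins {Pos : Type} (G : Game Pos) : Prop :=
  G.WinsFor (fun x => ¬ G.ownV x) (fun p => ¬ G.winV p)

/-- Ownership of positions in the evaluation game `𝒢(M, w ⊨ φ0)`:
Verifier owns disjunctions, diamonds, μ-formulas, μ-bound variables and
false literals. -/
def evalOwnV {Λ W : Type} (M : KModel Λ W) (φ0 : MuForm Λ) :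
    MuForm Λ × W → Prop := fun q =>
  match q with
  | (.or _ _, _) => True
  | (.dia _ _, _) => True
  | (.mu _ _, _) => True
  | (.var X, _) => ∃ a : MuForm Λ, (MuForm.mu X a) ∈ φ0.subfs
  | (.prop p, w) => w ∉ M.V p
  | (.nprop p, w) => w ∈ M.V p
  | _ => False

/-- Admissible moves in the evaluation game `𝒢(M, w ⊨ φ0)`. -/
def evalMove {Λ W : Type} (M : KModel Λ W) (φ0 : MuForm Λ) :
    MuForm Λ × W → MuForm Λ × W → Prop := fun q r =>
  match q with
  | (.and a b, w) => r = (a, w) ∨ r = (b, w)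
  | (.or a b, w) => r = (a, w) ∨ r = (b, w)
  | (.box i a, w) => ∃ v, M.R i w v ∧ r = (a, v)
  | (.dia i a, w) => ∃ v, M.R i w v ∧ r = (a, v)
  | (.mu _ a, w) => r = (a, w)
  | (.nu _ a, w) => r = (a, w)
  | (.var X, w) =>
      ∃ a : MuForm Λ,
        ((MuForm.mu X a) ∈ φ0.subfs ∧ r = (MuForm.mu X a, w)) ∨
        ((MuForm.nu X a) ∈ φ0.subfs ∧ r = (MuForm.nu X a, w))
  | (.prop _, _) => False
  | (.nprop _, _) => False

/-- The formula `ψ` labels infinitely many positions of the infinite run `p`. -/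
def InfOccF {Λ W : Type} (p : ℕ → MuForm Λ × W) (ψ : MuForm Λ) : Prop :=
  ∀ n, ∃ m, n ≤ m ∧ (p m).1 = ψ

/-- Verifier wins an infinite run iff the outermost fixed-point subformula
occurring infinitely often is a ν-formula. -/
def evalWinV {Λ W : Type} (p : ℕ → MuForm Λ × W) : Prop :=
  ∃ (X : ℕ) (a : MuForm Λ), InfOccF p (MuForm.nu X a) ∧
    ∀ χ : MuForm Λ, InfOccF p χ → χ ∈ (MuForm.nu X a).subfs

/-- The evaluation game `𝒢(M, w ⊨ φ)`. -/
def evalGame {Λ W : Type} (M : KModel Λ W) (w : W) (φ : MuForm Λ) :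
    Game (MuForm Λ × W) where
  init := (φ, w)
  ownV := evalOwnV M φ
  move := evalMove M φ
  winV := evalWinV

/-- A parity game. -/
structure PGame : Type 1 where
  Pos : Type
  ownE : Pos → Prop
  init : Pos
  E : Pos → Pos → Prop
  Ω : Pos → ℕ

/-- The parity `k` occurs infinitely often in the infinite play `p`. -/
def InfOccPar (P : PGame) (p : ℕ → P.Pos) (k : ℕ) : Prop :=
  ∀ n, ∃ m, n ≤ m ∧ P.Ω (p m) = k

/-- A parity game as a game: ∃ wins an infinite play iff the greatest parity
occurring infinitely often is even. -/
def PGame.toGame (P : PGame) : Game P.Pos where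
  init := P.init
  ownV := P.ownE
  move := P.E
  winV := fun p => ∃ k, Even k ∧ InfOccPar P p k ∧ ∀ j, InfOccPar P p j → j ≤ k

/-- Player ∃ wins the parity game. -/
def PGame.ExWins (P : PGame) : Prop := P.toGame.VWins

/-- Player ∀ wins the parity game. -/
def PGame.AWins (P : PGame) : Prop := P.toGame.RWins

/-- The parity of a fixed-point formula: `2(i+ε) − 1` for a μ-formula in
`Σ^μ_{2i+ε} \ Π^μ_{2i+ε}`, `2i` for a ν-formula in `Π^μ_{2i+ε} \ Σ^μ_{2i+ε}`,
and `0` for non fixed-point formulas. -/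
noncomputable def fpParity {Λ : Type} : MuForm Λ → ℕ := fun φ =>
  match φ with
  | .mu _ _ =>
      (fun ℓ => if Even ℓ then ℓ - 1 else ℓ) (sInf {k | SigmaMu k φ ∧ ¬ PiMu k φ})
  | .nu _ _ =>
      (fun ℓ => if Even ℓ then ℓ else ℓ - 1) (sInf {k | PiMu k φ ∧ ¬ SigmaMu k φ})
  | _ => 0

/-- The evaluation game `𝒢(M, w ⊨ φ)` presented as the parity game
`𝒢^P(M, w ⊨ φ)`. -/
noncomputable def evalPGame {Λ W : Type} (M : KModel Λ W) (w : W)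
    (φ : MuForm Λ) : PGame where
  Pos := MuForm Λ × W
  ownE := evalOwnV M φ
  init := (φ, w)
  E := evalMove M φ
  Ω := fun q => fpParity q.1

/- ### Tree unfolding of a parity game -/

/-- Finite `E`-paths of a parity game starting at the initial position,
presented as (last vertex, reversed list of earlier vertices). -/
inductive IsUPath (P : PGame) : P.Pos × List P.Pos → Prop where
  | init : IsUPath P (P.init, [])
  | cons {u : P.Pos} {t : List P.Pos} {v : P.Pos} :
      IsUPath P (u, t) → P.E u v → IsUPath P (v, u :: t)

/-- The tree unfolding of a parity game: positions are the finite `E`-paths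
starting at the initial position, with ownership and parity inherited from
the last vertex. -/
def PGame.unfold (P : PGame) : PGame where
  Pos := {q : P.Pos × List P.Pos // IsUPath P q}
  ownE := fun q => P.ownE q.val.1
  init := ⟨(P.init, []), IsUPath.init⟩
  E := fun q r => r.val.2 = q.val.1 :: q.val.2 ∧ P.E q.val.1 r.val.1
  Ω := fun q => P.Ω q.val.1

/- ### The Kripke encoding of parity games and the formulas W_n -/

/- Propositional indices used for the encoding:
`bd = 0`, `pos = 1`, `pre₀ = 2`, `nxt₀ = 3`, `pre₁ = 4`, `nxt₁ = 5`,
`P_∃ = 6`, `P_∀ = 7`, `P_j = 8 + j`. -/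

/-- Worlds of the Kripke model encoding a parity game: a world `pos v` for
each position `v`, and intermediate choice/confirmation worlds `mid u u'`
for the edges. -/
inductive EncW (Pos : Type) : Type where
  | pos : Pos → EncW Pos
  | mid : Pos → Pos → EncW Pos

/-- Choice steps (`R₀`) of the encoding. -/
def encR0 (P : PGame) : EncW P.Pos → EncW P.Pos → Prop
  | EncW.pos v, EncW.mid u u' => v = u ∧ P.E u u'
  | _, _ => False

/-- Confirmation steps (`R₁`) of the encoding. -/
def encR1 (P : PGame) : EncW P.Pos → EncW P.Pos → Prop
  | EncW.mid u u', EncW.pos v => v = u' ∧ P.E u u'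
  | _, _ => False

/-- Valuation of the encoding. -/
def encV (P : PGame) : ℕ → Set (EncW P.Pos) := fun n =>
  if n = 0 then Set.univ                                         -- bd
  else if n = 1 then {x | ∃ v, x = EncW.pos v}                   -- pos
  else if n = 2 then {x | ∃ v, x = EncW.pos v}                   -- pre₀
  else if n = 3 then {x | ∃ u u', x = EncW.mid u u'}             -- nxt₀
  else if n = 4 then {x | ∃ u u', x = EncW.mid u u'}             -- pre₁
  else if n = 5 then {x | ∃ v, x = EncW.pos v}                   -- nxt₁
  else if n = 6 then {x | ∃ v, x = EncW.pos v ∧ P.ownE v}        -- P_∃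
  else if n = 7 then {x | ∃ v, x = EncW.pos v ∧ ¬ P.ownE v}      -- P_∀
  else {x | ∃ v, x = EncW.pos v ∧ P.Ω v = n - 8}                 -- P_{n-8}

/-- The bimodal Kripke model `P^K` encoding the parity game `P`. -/
def encModel (P : PGame) : KModel (Fin 2) (EncW P.Pos) where
  R := fun i => if i = 0 then encR0 P else encR1 P
  V := encV P

/-- `♦φ := νY. pre₀ ∧ bd ∧ ◇₀(nxt₀ ∧ pre₁ ∧ bd ∧ ◇₁(nxt₁ ∧ bd ∧
((Y ∧ ¬pos) ∨ (φ ∧ pos))))`. -/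
def DiamW (Y : ℕ) (φ : MuForm (Fin 2)) : MuForm (Fin 2) :=
  .nu Y (.and (.prop 2) (.and (.prop 0)
    (.dia 0 (.and (.prop 3) (.and (.prop 4) (.and (.prop 0)
      (.dia 1 (.and (.prop 5) (.and (.prop 0)
        (.or (.and (.var Y) (.nprop 1)) (.and φ (.prop 1))))))))))))

/-- `■φ := νY. (pre₀ ∧ bd → □₀(nxt₀ ∧ pre₁ ∧ bd → □₁(nxt₁ ∧ bd →
((Y ∧ ¬pos) ∧ (φ ∧ pos)))))`, implications written disjunctively. -/
def BoxW (Y : ℕ) (φ : MuForm (Fin 2)) : MuForm (Fin 2) :=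
  .nu Y (.or (.or (.nprop 2) (.nprop 0))
    (.box 0 (.or (.or (.nprop 3) (.or (.nprop 4) (.nprop 0)))
      (.box 1 (.or (.or (.nprop 5) (.nprop 0))
        (.and (.and (.var Y) (.nprop 1)) (.and φ (.prop 1))))))))

/-- The `j`-th disjunct `(P_j ∧ P_∃ ∧ ♦X_j) ∨ (P_j ∧ P_∀ ∧ ■X_j)`. -/
def WDisj (Y j : ℕ) : MuForm (Fin 2) :=
  .or (.and (.prop (8 + j)) (.and (.prop 6) (DiamW Y (.var j))))
      (.and (.prop (8 + j)) (.and (.prop 7) (BoxW Y (.var j))))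

/-- The disjunction `⋁_{0 ≤ j ≤ n} [(P_j ∧ P_∃ ∧ ♦X_j) ∨ (P_j ∧ P_∀ ∧ ■X_j)]`. -/
def WBody (Y : ℕ) : ℕ → MuForm (Fin 2)
  | 0 => WDisj Y 0
  | j + 1 => .or (WBody Y (j)) (WDisj Y (j + 1))

/-- The alternating block of binders `ηX_n … νX_2 μX_1 νX_0`
(`νX_j` for even `j`, `μX_j` for odd `j`). -/
def WBind : ℕ → MuForm (Fin 2) → MuForm (Fin 2)
  | 0, φ => .nu 0 φ
  | j + 1, φ =>
      if Even (j + 1) then .nu (j + 1) (WBind j φ) else .mu (j + 1) (WBind j φ)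

/-- The winning region formula
`W_n := ηX_n … νX_2 μX_1 νX_0. ⋁_{0≤j≤n} [(P_j ∧ P_∃ ∧ ♦X_j) ∨ (P_j ∧ P_∀ ∧ ■X_j)]`,
where the fresh variable `Y` of `♦`/`■` is `n + 1`. -/
def Wfml (n : ℕ) : MuForm (Fin 2) := WBind n (WBody (n + 1) n)

/- ### Pointed bimodal models, restriction, isomorphisms, the map f_φ -/

/-- A pointed bimodal Kripke model. -/
structure PModel : Type 1 where
  World : Type
  R0 : World → World → Prop
  R1 : World → World → Prop
  V : ℕ → Set World
  pt : World

/-- The underlying bimodal Kripke model. -/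
def PModel.toK (M : PModel) : KModel (Fin 2) M.World :=
  ⟨fun i => if i = 0 then M.R0 else M.R1, M.V⟩

/-- The edges of the graph of a pointed bimodal model. -/
def PModel.edge (M : PModel) (x y : M.World) : Prop := M.R0 x y ∨ M.R1 x y

/-- The graph of the model has no loops. -/
def PModel.Acyclic (M : PModel) : Prop :=
  ∀ x : M.World, ¬ Relation.TransGen M.edge x x

/-- Reachability in at most `k` steps. -/
def stepsLe (M : PModel) : ℕ → M.World → M.World → Prop
  | 0 => fun x y => x = y
  | k + 1 => fun x y => stepsLe M k x y ∨ ∃ u, stepsLe M k x u ∧ M.edge u y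

/-- The worlds at distance less than `n` from the distinguished point. -/
def PModel.ball (M : PModel) (n : ℕ) : Set M.World :=
  {v | ∃ k, k + 1 ≤ n ∧ stepsLe M k M.pt v}

/-- `e` is an isomorphism between the restrictions `(M↾n, w)` and `(M'↾n, w')`,
i.e. an `n`-isomorphism. -/
structure IsNIso (M M' : PModel) (n : ℕ)
    (e : {x // x ∈ M.ball n} ≃ {x // x ∈ M'.ball n}) : Prop where
  pt : ∀ hx : M.pt ∈ M.ball n, (e ⟨M.pt, hx⟩).val = M'.pt
  r0 : ∀ x y : {x // x ∈ M.ball n}, M.R0 x.val y.val ↔ M'.R0 (e x).val (e y).val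
  r1 : ∀ x y : {x // x ∈ M.ball n}, M.R1 x.val y.val ↔ M'.R1 (e x).val (e y).val
  vals : ∀ (p : ℕ) (x : {x // x ∈ M.ball n}), x.val ∈ M.V p ↔ (e x).val ∈ M'.V p

/-- The pointed models are `n`-isomorphic. -/
def NIsomorphic (M M' : PModel) (n : ℕ) : Prop := ∃ e, IsNIso M M' n e

/-- `e` is an isomorphism of pointed bimodal models. -/
structure IsIsoP (M M' : PModel) (e : M.World ≃ M'.World) : Prop where
  pt : e M.pt = M'.pt
  r0 : ∀ x y : M.World, M.R0 x y ↔ M'.R0 (e x) (e y)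
  r1 : ∀ x y : M.World, M.R1 x y ↔ M'.R1 (e x) (e y)
  vals : ∀ (p : ℕ) (x : M.World), x ∈ M.V p ↔ e x ∈ M'.V p

/-- The pointed models are isomorphic. -/
def IsomorphicP (M M' : PModel) : Prop := ∃ e, IsIsoP M M' e

/-- The map `f_φ` sending a pointed bimodal model `(M, w)` to the pointed
Kripke model `(𝒢^K(M, w ⊨ φ), ⟨φ, w⟩)` representing its evaluation game,
where `𝒢^K(M, w ⊨ φ) = (𝒢^P(M, w ⊨ φ))^K`. -/
noncomputable def fGame (φ : MuForm (Fin 2)) (M : PModel) : PModel where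
  World := EncW (MuForm (Fin 2) × M.World)
  R0 := encR0 (evalPGame M.toK M.pt φ)
  R1 := encR1 (evalPGame M.toK M.pt φ)
  V := encV (evalPGame M.toK M.pt φ)
  pt := EncW.pos (φ, M.pt)

/- ### Modal logics, fusions of logics, GLP -/

/-- Modal formulas (no fixed points) over a signature `I`, with full
implication and falsum. -/
inductive MForm (I : Type) : Type where
  | prop : ℕ → MForm I
  | fls : MForm I
  | imp : MForm I → MForm I → MForm I
  | box : I → MForm I → MForm I

namespace MForm

variable {I : Type}

def neg (a : MForm I) : MForm I := a.imp .fls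

def conj (a b : MForm I) : MForm I := (a.imp b.neg).neg

def diam (i : I) (a : MForm I) : MForm I := (MForm.box i a.neg).neg

def iff (a b : MForm I) : MForm I := conj (a.imp b) (b.imp a)

/-- Kripke semantics for modal formulas. -/
def semM {W : Type} (R : I → W → W → Prop) (V : ℕ → Set W) : MForm I → Set W
  | prop p => V p
  | fls => ∅
  | imp a b => {w | w ∈ semM R V a → w ∈ semM R V b}
  | box i a => {w | ∀ v, R i w v → v ∈ semM R V a}

/-- Uniform substitution of formulas for propositional symbols. -/
def substP (σ : ℕ → MForm I) : MForm I → MForm I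
  | prop p => σ p
  | fls => fls
  | imp a b => imp (substP σ a) (substP σ b)
  | box i a => box i (substP σ a)

/-- The formula only uses modalities from `S`. -/
def UsesOnly (S : Set I) : MForm I → Prop
  | prop _ => True
  | fls => True
  | imp a b => UsesOnly S a ∧ UsesOnly S b
  | box i a => i ∈ S ∧ UsesOnly S a

/-- The propositional symbol `x` occurs in the formula. -/
def PropOccurs (x : ℕ) : MForm I → Prop
  | prop p => p = x
  | fls => False
  | imp a b => PropOccurs x a ∨ PropOccurs x b
  | box _ a => PropOccurs x a

/-- Every occurrence of the propositional symbol `x` is within the scope of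
some modality. -/
def Guarded (x : ℕ) : MForm I → Prop
  | prop p => p ≠ x
  | fls => True
  | imp a b => Guarded x a ∧ Guarded x b
  | box _ _ => True

end MForm

/-- Propositional tautologies: formulas true under every boolean valuation
treating propositional symbols and boxed formulas as atoms. -/
def IsTaut {I : Type} (φ : MForm I) : Prop :=
  ∀ val : MForm I → Prop, ¬ val .fls →
    (∀ a b : MForm I, val (a.imp b) ↔ (val a → val b)) → val φ

/-- A modal formula is valid on a frame: it holds at every world under
every valuation. -/
def ValidOn {I : Type} (F : Frame I) (φ : MForm I) : Prop :=
  ∀ (V : ℕ → Set F.World) (w : F.World), w ∈ MForm.semM F.R V φ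

/-- `L` is a normal modal logic in the signature `S`. -/
structure IsNormalIn {I : Type} (S : Set I) (L : Set (MForm I)) : Prop where
  inSig : ∀ φ ∈ L, MForm.UsesOnly S φ
  taut : ∀ φ : MForm I, MForm.UsesOnly S φ → IsTaut φ → φ ∈ L
  axK : ∀ i ∈ S, ∀ a b : MForm I, MForm.UsesOnly S a → MForm.UsesOnly S b →
    ((MForm.box i (a.imp b)).imp ((MForm.box i a).imp (MForm.box i b))) ∈ L
  mp : ∀ a b : MForm I, a ∈ L → (a.imp b) ∈ L → b ∈ L
  nec : ∀ i ∈ S, ∀ a : MForm I, a ∈ L → MForm.box i a ∈ L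
  subst : ∀ σ : ℕ → MForm I, (∀ p, MForm.UsesOnly S (σ p)) →
    ∀ a ∈ L, a.substP σ ∈ L

/-- The fusion of a family of modal logics: the smallest normal modal logic
in the combined signature containing each of them. -/
def FusionLogic {I J : Type} (Ls : J → Set (MForm I)) : Set (MForm I) :=
  ⋂₀ {L : Set (MForm I) | IsNormalIn Set.univ L ∧ ∀ j, Ls j ⊆ L}

/-- Extension of a frame for the `j`-th component signature to the full
signature (the other relations are empty; validity of formulas in the
component signature is unaffected). -/
def extendFrame {I J : Type} (c : I → J) (j : J)
    (F : Frame {i : I // c i = j}) : Frame I :=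
  ⟨F.World, fun i w v => ∃ h : c i = j, F.R ⟨i, h⟩ w v⟩

/-- The reduct of a frame for the full signature to the `j`-th component. -/
def Frame.reductTo {I J : Type} (c : I → J) (j : J) (F : Frame I) :
    Frame {i : I // c i = j} :=
  ⟨F.World, fun i => F.R i.val⟩

/-- `L` is characterized by the class `Fs` of frames in the `j`-th component
signature: `L` consists exactly of the formulas of that signature valid on
every frame of `Fs`. -/
def CharacterizedBy {I J : Type} (c : I → J) (j : J) (L : Set (MForm I))
    (Fs : Set (Frame {i : I // c i = j})) : Prop :=
  L = {φ | MForm.UsesOnly {i | c i = j} φ ∧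
        ∀ F ∈ Fs, ValidOn (extendFrame c j F) φ}

/-- The fusion of classes of frames in pairwise disjoint signatures. -/
def FusionFrames {I J : Type} (c : I → J)
    (Fs : ∀ j : J, Set (Frame {i : I // c i = j})) : Set (Frame I) :=
  {F | ∀ j, F.reductTo c j ∈ Fs j}

/-- The finite model property for a logic in signature `S`. -/
def HasFMP {I : Type} (S : Set I) (L : Set (MForm I)) : Prop :=
  ∀ φ : MForm I, MForm.UsesOnly S φ → φ ∉ L →
    ∃ (W : Type) (_ : Finite W) (R : I → W → W → Prop) (V : ℕ → Set W),
      (∀ ψ ∈ L, ∀ w : W, w ∈ MForm.semM R V ψ) ∧ ∃ w : W, w ∉ MForm.semM R V φ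

/-- The provability logic `GLP` (signature `ℕ`). -/
inductive GLPthm : MForm ℕ → Prop where
  | taut {φ : MForm ℕ} : IsTaut φ → GLPthm φ
  | axK (n : ℕ) (a b : MForm ℕ) :
      GLPthm ((MForm.box n (a.imp b)).imp ((MForm.box n a).imp (MForm.box n b)))
  | axLob (n : ℕ) (a : MForm ℕ) :
      GLPthm ((MForm.box n ((MForm.box n a).imp a)).imp (MForm.box n a))
  | axMono {m n : ℕ} (h : m ≤ n) (a : MForm ℕ) :
      GLPthm ((MForm.box m a).imp (MForm.box n a))
  | axStab {m n : ℕ} (h : m ≤ n) (a : MForm ℕ) :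
      GLPthm ((MForm.box m a).imp (MForm.box n (MForm.box m a)))
  | axStabD {m n : ℕ} (h : m ≤ n) (a : MForm ℕ) :
      GLPthm ((MForm.diam m a).imp (MForm.box n (MForm.diam m a)))
  | mp {a b : MForm ℕ} : GLPthm (a.imp b) → GLPthm a → GLPthm b
  | nec (n : ℕ) {a : MForm ℕ} : GLPthm a → GLPthm (MForm.box n a)
  | subst (σ : ℕ → MForm ℕ) {a : MForm ℕ} : GLPthm a → GLPthm (a.substP σ)

/- ### Frame classes for the standard modal logics -/

def FK : Set (Frame Unit) := Set.univ
def FK4 : Set (Frame Unit) := {F | Transitive (F.R ())}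
def FS4 : Set (Frame Unit) := {F | Reflexive (F.R ()) ∧ Transitive (F.R ())}
def FKD45 : Set (Frame Unit) :=
  {F | (∀ w, ∃ v, F.R () w v) ∧ Transitive (F.R ()) ∧
    (∀ w v u, F.R () w v → F.R () w u → F.R () v u)}
def FS5 : Set (Frame Unit) := {F | Equivalence (F.R ())}
def FGL : Set (Frame Unit) :=
  {F | Transitive (F.R ()) ∧ ¬ ∃ f : ℕ → F.World, ∀ k, F.R () (f k) (f (k + 1))}

/-!
Let `φ` be outside the fusion. Replacing the boxes of colours other than `k` by fresh
propositional symbols turns a formula into its `k`-surrogate, a formula of `L_k`; substituting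
the boxes back shows that the surrogate of a description (a Boolean combination of all the
literals of `φ`) consistent with the fusion is consistent with `L_k`, so by the finite model
property it holds at the root of a finite frame of `L_k`. Starting from a consistent
description refuting `φ`, we grow a tree of such components, attaching at each world, for each
colour other than the one of the component it lies in, a component realising its description,
down to the modal depth of `φ`. The components also satisfy, to that depth, the surrogates of
the negations of all inconsistent descriptions, so every world reached again carries a
consistent description, and a world satisfies a subformula of `φ` exactly when its
description does. To place the leaves in frames of `L_k` as well, the tree is copied once for
each world of a fixed finite frame of each colour, and the copies of a leaf form a copy of that
frame. Each reduct is then a disjoint union of finite frames of `L_k`, so the model validates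
every `L_k`, hence the fusion.
-/

namespace BooleanSubalgebra

variable {α : Type*} (B : BooleanSubalgebra (Set α))

def indist : Setoid α where
  r x y := ∀ Z ∈ B, x ∈ Z ↔ y ∈ Z
  iseqv := ⟨fun _ _ _ => Iff.rfl, fun h Z hZ => (h Z hZ).symm,
    fun h₁ h₂ Z hZ => (h₁ Z hZ).trans (h₂ Z hZ)⟩

theorem preimage_mk_image_mk {Z : Set α} (hZ : Z ∈ B) :
    Quotient.mk B.indist ⁻¹' (Quotient.mk B.indist '' Z) = Z := by
  ext x
  constructor
  · rintro ⟨y, hy, hyx⟩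
    exact (Quotient.exact hyx Z hZ).1 hy
  · exact fun hx => ⟨x, hx, rfl⟩

/-- The preimage is the finite union of its classes, each of which is the finite
intersection of the members of `B` containing it. -/
theorem preimage_mk_mem [Finite α] (Y : Set (Quotient B.indist)) :
    Quotient.mk B.indist ⁻¹' Y ∈ B := by
  have hcls : ∀ x, (⋂ Z ∈ {Z | Z ∈ B ∧ x ∈ Z}, Z) ∈ B := fun x =>
    B.infClosed.biInf_mem (Set.toFinite _) B.top_mem fun Z hZ => hZ.1
  have hY : Quotient.mk B.indist ⁻¹' Y = ⋃ x ∈ Quotient.mk B.indist ⁻¹' Y,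
      ⋂ Z ∈ {Z | Z ∈ B ∧ x ∈ Z}, Z := by
    ext y
    simp only [Set.mem_preimage, Set.mem_iUnion, Set.mem_iInter, Set.mem_ofPred_eq, and_imp]
    refine ⟨fun hy => ⟨y, hy, fun _ _ h => h⟩, fun ⟨x, hx, hxy⟩ => ?_⟩
    have : Quotient.mk B.indist x = Quotient.mk B.indist y := Quotient.sound fun Z hZ =>
      ⟨hxy Z hZ, fun hyZ => by_contra fun hxZ => hxy Zᶜ (B.compl_mem hZ) hxZ hyZ⟩
    rwa [← this]
  rw [hY]
  exact B.supClosed.biSup_mem (Set.toFinite _) B.bot_mem fun x _ => hcls x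

end BooleanSubalgebra

namespace MForm

variable {I W : Type}

section Semantics

variable {R : I → W → W → Prop} {V : ℕ → Set W} {w : W}

@[simp] theorem mem_semM_fls : w ∉ semM R V (fls : MForm I) := id

@[simp] theorem mem_semM_imp {a b : MForm I} :
    w ∈ semM R V (a.imp b) ↔ (w ∈ semM R V a → w ∈ semM R V b) := Iff.rfl

@[simp] theorem mem_semM_box {i : I} {a : MForm I} :
    w ∈ semM R V (box i a) ↔ ∀ v, R i w v → v ∈ semM R V a := Iff.rfl

@[simp] theorem mem_semM_neg {a : MForm I} : w ∈ semM R V a.neg ↔ w ∉ semM R V a := Iff.rfl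

@[simp] theorem mem_semM_conj {a b : MForm I} :
    w ∈ semM R V (conj a b) ↔ w ∈ semM R V a ∧ w ∈ semM R V b := by
  simp [conj]

def bigConj : List (MForm I) → MForm I
  | [] => fls.neg
  | a :: t => conj a (bigConj t)

@[simp] theorem mem_semM_bigConj {l : List (MForm I)} :
    w ∈ semM R V (bigConj l) ↔ ∀ a ∈ l, w ∈ semM R V a := by
  induction l with
  | nil => simp [bigConj]
  | cons a t ih => simp [bigConj, ih]

theorem semM_substP (σ : ℕ → MForm I) :
    ∀ φ : MForm I, semM R V (φ.substP σ) = semM R (fun p => semM R V (σ p)) φ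
  | prop _ => rfl
  | fls => rfl
  | imp a b => by simp only [substP, semM, semM_substP σ a, semM_substP σ b]
  | box i a => by simp only [substP, semM, semM_substP σ a]

end Semantics

theorem usesOnly_univ : ∀ φ : MForm I, UsesOnly Set.univ φ
  | prop _ => trivial
  | fls => trivial
  | imp a b => ⟨usesOnly_univ a, usesOnly_univ b⟩
  | box _ a => ⟨trivial, usesOnly_univ a⟩

section UsesOnly

variable {S : Set I}

theorem UsesOnly.neg {a : MForm I} (h : UsesOnly S a) : UsesOnly S a.neg := ⟨h, trivial⟩

theorem UsesOnly.conj {a b : MForm I} (ha : UsesOnly S a) (hb : UsesOnly S b) :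
    UsesOnly S (conj a b) :=
  UsesOnly.neg ⟨ha, hb.neg⟩

theorem UsesOnly.bigConj {l : List (MForm I)} (h : ∀ a ∈ l, UsesOnly S a) :
    UsesOnly S (bigConj l) := by
  induction l with
  | nil => exact UsesOnly.neg trivial
  | cons a t ih => exact (h a (by simp)).conj (ih fun b hb => h b (by simp [hb]))

theorem UsesOnly.substP {σ : ℕ → MForm I} (hσ : ∀ p, UsesOnly S (σ p)) :
    ∀ {a : MForm I}, UsesOnly S a → UsesOnly S (a.substP σ)
  | prop p, _ => hσ p
  | fls, _ => trivial
  | imp _ _, h => ⟨UsesOnly.substP hσ h.1, UsesOnly.substP hσ h.2⟩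
  | box _ _, h => ⟨h.1, UsesOnly.substP hσ h.2⟩

end UsesOnly

structure IsImpHom (f : MForm I → MForm I) : Prop where
  map_fls : f fls = fls
  map_imp : ∀ a b, f (a.imp b) = (f a).imp (f b)

namespace IsImpHom

variable {f : MForm I → MForm I} (hf : IsImpHom f)
include hf

theorem map_neg (a : MForm I) : f a.neg = (f a).neg := by
  rw [neg, hf.map_imp, hf.map_fls]; rfl

theorem map_conj (a b : MForm I) : f (conj a b) = conj (f a) (f b) := by
  rw [conj, hf.map_neg, hf.map_imp, hf.map_neg]; rfl

theorem map_bigConj (l : List (MForm I)) : f (bigConj l) = bigConj (l.map f) := by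
  induction l with
  | nil => exact (hf.map_neg _).trans (congrArg _ hf.map_fls)
  | cons a t ih => rw [bigConj, hf.map_conj, ih]; rfl

theorem comp {g : MForm I → MForm I} (hg : IsImpHom g) : IsImpHom (g ∘ f) :=
  ⟨by simp [hf.map_fls, hg.map_fls], fun a b => by simp [hf.map_imp, hg.map_imp]⟩

end IsImpHom

theorem isImpHom_substP (σ : ℕ → MForm I) : IsImpHom (substP σ) := ⟨rfl, fun _ _ => rfl⟩

structure IsBoolVal (val : MForm I → Prop) : Prop where
  not_fls : ¬ val fls
  imp_iff : ∀ a b, val (a.imp b) ↔ (val a → val b)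

theorem isTaut_iff {φ : MForm I} : IsTaut φ ↔ ∀ val, IsBoolVal val → val φ :=
  ⟨fun h val hv => h val hv.1 hv.2, fun h val h0 hi => h val ⟨h0, hi⟩⟩

theorem isBoolVal_semM (R : I → W → W → Prop) (V : ℕ → Set W) (w : W) :
    IsBoolVal (fun φ : MForm I => w ∈ semM R V φ) :=
  ⟨id, fun _ _ => Iff.rfl⟩

namespace IsBoolVal

variable {val : MForm I → Prop} (hv : IsBoolVal val)
include hv

theorem neg_iff (a : MForm I) : val a.neg ↔ ¬ val a := by
  rw [neg, hv.imp_iff]; exact imp_congr_right fun _ => iff_false_intro hv.not_fls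

theorem conj_iff (a b : MForm I) : val (conj a b) ↔ val a ∧ val b := by
  rw [conj, hv.neg_iff, hv.imp_iff, hv.neg_iff]; tauto

theorem bigConj_iff (l : List (MForm I)) : val (bigConj l) ↔ ∀ a ∈ l, val a := by
  induction l with
  | nil => simpa [bigConj, hv.neg_iff] using hv.not_fls
  | cons a t ih => simp [bigConj, hv.conj_iff, ih]

theorem comp {f : MForm I → MForm I} (hf : IsImpHom f) : IsBoolVal (val ∘ f) :=
  ⟨by simpa [hf.map_fls] using hv.not_fls, fun a b => by simp [hf.map_imp, hv.imp_iff]⟩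

end IsBoolVal

def subformulas : MForm I → List (MForm I)
  | prop p => [prop p]
  | fls => [fls]
  | imp a b => imp a b :: (subformulas a ++ subformulas b)
  | box i a => box i a :: subformulas a

theorem self_mem_subformulas : ∀ φ : MForm I, φ ∈ subformulas φ
  | prop _ | fls => List.mem_singleton_self _
  | imp _ _ | box _ _ => List.mem_cons_self

theorem subformulas_subset {χ : MForm I} :
    ∀ {ψ : MForm I}, ψ ∈ subformulas χ → subformulas ψ ⊆ subformulas χ := by
  induction χ with
  | prop _ | fls => intro ψ h; rw [List.mem_singleton.1 h]; exact List.Subset.refl _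
  | imp a b iha ihb =>
    intro ψ h
    rcases List.mem_cons.1 h with rfl | h
    · exact List.Subset.refl _
    rcases List.mem_append.1 h with h | h
    · exact fun _ hx => List.mem_cons_of_mem _ (List.mem_append_left _ (iha h hx))
    · exact fun _ hx => List.mem_cons_of_mem _ (List.mem_append_right _ (ihb h hx))
  | box i a iha =>
    intro ψ h
    rcases List.mem_cons.1 h with rfl | h
    · exact List.Subset.refl _
    · exact fun _ hx => List.mem_cons_of_mem _ (iha h hx)

theorem mem_subformulas_trans {χ ψ θ : MForm I} (h₁ : θ ∈ subformulas ψ)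
    (h₂ : ψ ∈ subformulas χ) : θ ∈ subformulas χ :=
  subformulas_subset h₂ h₁

theorem imp_left_mem {χ a b : MForm I} (h : imp a b ∈ subformulas χ) : a ∈ subformulas χ :=
  mem_subformulas_trans (by simp [subformulas, self_mem_subformulas]) h

theorem imp_right_mem {χ a b : MForm I} (h : imp a b ∈ subformulas χ) : b ∈ subformulas χ :=
  mem_subformulas_trans (by simp [subformulas, self_mem_subformulas]) h

theorem box_arg_mem {χ a : MForm I} {i : I} (h : box i a ∈ subformulas χ) :
    a ∈ subformulas χ :=
  mem_subformulas_trans (by simp [subformulas, self_mem_subformulas]) h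

def depth : MForm I → ℕ
  | prop _ | fls => 0
  | imp a b => max (depth a) (depth b)
  | box _ a => depth a + 1

def maxProp : MForm I → ℕ
  | prop p => p
  | fls => 0
  | imp a b => max (maxProp a) (maxProp b)
  | box _ a => maxProp a

theorem le_maxProp {χ : MForm I} {p : ℕ} (h : prop p ∈ subformulas χ) : p ≤ maxProp χ := by
  induction χ with
  | prop q => cases List.mem_singleton.1 h; exact le_rfl
  | fls => cases List.mem_singleton.1 h
  | imp a b iha ihb =>
    simp only [subformulas, List.mem_cons, List.mem_append, reduceCtorEq, false_or] at h
    rcases h with h | h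
    · exact (iha h).trans (le_max_left _ _)
    · exact (ihb h).trans (le_max_right _ _)
  | box i a iha =>
    simp only [subformulas, List.mem_cons, reduceCtorEq, false_or] at h
    exact iha h

def mods : MForm I → List I
  | prop _ | fls => []
  | imp a b => mods a ++ mods b
  | box i a => i :: mods a

theorem mem_mods {χ a : MForm I} {i : I} (h : box i a ∈ subformulas χ) : i ∈ mods χ := by
  induction χ with
  | prop _ | fls => cases List.mem_singleton.1 h
  | imp x y ihx ihy =>
    simp only [subformulas, List.mem_cons, List.mem_append, reduceCtorEq, false_or] at h
    rcases h with h | h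
    · exact List.mem_append_left _ (ihx h)
    · exact List.mem_append_right _ (ihy h)
  | box j x ih =>
    rcases List.mem_cons.1 h with h | h
    · cases h; exact List.mem_cons_self
    · exact List.mem_cons_of_mem _ (ih h)

def isLit : MForm I → Bool
  | prop _ | box _ _ => true
  | _ => false

def isBox : MForm I → Bool
  | box _ _ => true
  | _ => false

def evalDesc (D : List (MForm I)) : MForm I → Prop
  | prop p => prop p ∈ D
  | fls => False
  | imp a b => evalDesc D a → evalDesc D b
  | box i a => box i a ∈ D

theorem IsBoolVal.iff_evalDesc {val : MForm I → Prop} (hv : IsBoolVal val)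
    {D : List (MForm I)} :
    ∀ φ : MForm I, (∀ b ∈ subformulas φ, isLit b → (val b ↔ b ∈ D)) →
      (val φ ↔ evalDesc D φ)
  | prop _, h => h _ (self_mem_subformulas _) rfl
  | fls, _ => iff_of_false hv.not_fls id
  | imp a b, h => by
    rw [hv.imp_iff, hv.iff_evalDesc a fun c hc => h c (by simp [subformulas, hc]),
      hv.iff_evalDesc b fun c hc => h c (by simp [subformulas, hc])]
    rfl
  | box _ _, h => h _ (self_mem_subformulas _) rfl

theorem semM_preimage_iff {W' : Type} {S : Set I} {R : I → W → W → Prop}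
    {R' : I → W' → W' → Prop} {g : W → W'} {D : Set W}
    (closed : ∀ i ∈ S, ∀ x ∈ D, ∀ y, R i x y → y ∈ D)
    (forth : ∀ i ∈ S, ∀ x ∈ D, ∀ y, R i x y → R' i (g x) (g y))
    (back : ∀ i ∈ S, ∀ x ∈ D, ∀ y', R' i (g x) y' → ∃ y, R i x y ∧ g y = y')
    (V : ℕ → Set W') :
    ∀ φ : MForm I, UsesOnly S φ → ∀ x ∈ D,
      (x ∈ semM R (fun p => g ⁻¹' V p) φ ↔ g x ∈ semM R' V φ)
  | prop _, _, _, _ => Iff.rfl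
  | fls, _, _, _ => Iff.rfl
  | imp a b, h, x, hx => by
    simp only [mem_semM_imp, semM_preimage_iff closed forth back V a h.1 x hx,
      semM_preimage_iff closed forth back V b h.2 x hx]
  | box i a, h, x, hx => by
    simp only [mem_semM_box]
    constructor
    · intro ha y' hy'
      obtain ⟨y, hy, rfl⟩ := back i h.1 x hx y' hy'
      exact (semM_preimage_iff closed forth back V a h.2 y (closed i h.1 x hx y hy)).1 (ha y hy)
    · intro ha y hy
      exact (semM_preimage_iff closed forth back V a h.2 y (closed i h.1 x hx y hy)).2
        (ha _ (forth i h.1 x hx y hy))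

def definableSets (S : Set I) (R : I → W → W → Prop) (V : ℕ → Set W) :
    BooleanSubalgebra (Set W) where
  carrier := {X | ∃ φ, UsesOnly S φ ∧ semM R V φ = X}
  supClosed' := by
    rintro _ ⟨a, ha, rfl⟩ _ ⟨b, hb, rfl⟩
    exact ⟨a.neg.imp b, ⟨ha.neg, hb⟩, by ext; simp [or_iff_not_imp_left]⟩
  infClosed' := by
    rintro _ ⟨a, ha, rfl⟩ _ ⟨b, hb, rfl⟩
    exact ⟨conj a b, ha.conj hb, by ext; simp⟩
  compl_mem' := by
    rintro _ ⟨a, ha, rfl⟩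
    exact ⟨a.neg, ha.neg, by ext; simp⟩
  bot_mem' := ⟨fls, trivial, rfl⟩

section Refinement

variable {S : Set I} {R : I → W → W → Prop} {V : ℕ → Set W}

abbrev Refinement (S : Set I) (R : I → W → W → Prop) (V : ℕ → Set W) : Type :=
  Quotient (definableSets S R V).indist

def refinementRel (S : Set I) (R : I → W → W → Prop) (V : ℕ → Set W) (i : I)
    (a b : Refinement S R V) : Prop :=
  ∃ x y, ⟦x⟧ = a ∧ ⟦y⟧ = b ∧ R i x y

theorem exists_subst_of_refinement [Finite W] (U : ℕ → Set (Refinement S R V)) :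
    ∃ θ : ℕ → MForm I, (∀ p, UsesOnly S (θ p)) ∧
      ∀ φ, semM R (fun p => Quotient.mk _ ⁻¹' U p) φ = semM R V (φ.substP θ) := by
  choose θ hθ using fun p => (definableSets S R V).preimage_mk_mem (U p)
  exact ⟨θ, fun p => (hθ p).1, fun φ => by simp only [semM_substP, (hθ _).2]⟩

theorem mk_mem_semM_refinement_iff [Finite W] (U : ℕ → Set (Refinement S R V)) :
    ∀ φ : MForm I, UsesOnly S φ → ∀ x,
      (⟦x⟧ ∈ semM (refinementRel S R V) U φ ↔
        x ∈ semM R (fun p => Quotient.mk _ ⁻¹' U p) φ)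
  | prop _, _, _ => Iff.rfl
  | fls, _, _ => Iff.rfl
  | imp a b, h, x => by
    simp only [mem_semM_imp, mk_mem_semM_refinement_iff U a h.1 x,
      mk_mem_semM_refinement_iff U b h.2 x]
  | box i a, h, x => by
    obtain ⟨θ, hθS, hθ⟩ := exists_subst_of_refinement U
    simp only [mem_semM_box]
    constructor
    · exact fun ha y hy => (mk_mem_semM_refinement_iff U a h.2 y).1 (ha _ ⟨x, y, rfl, rfl, hy⟩)
    · rintro ha _ ⟨x', y, hx', rfl, hy⟩
      -- the truth set of `box i a` is definable, so it cannot separate `x'` from `x`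
      have hdef : semM R (fun p => Quotient.mk _ ⁻¹' U p) (box i a) ∈ definableSets S R V :=
        ⟨_, UsesOnly.substP hθS h, (hθ _).symm⟩
      exact (mk_mem_semM_refinement_iff U a h.2 y).2
        ((Quotient.exact hx' _ hdef).2 ha y hy)

end Refinement

end MForm

open MForm

namespace IsNormalIn

variable {I : Type} {S : Set I} {L : Set (MForm I)} (hL : IsNormalIn S L)
include hL

theorem mem_of_taut {a b : MForm I} (ha : a ∈ L) (hb : UsesOnly S b) (h : IsTaut (a.imp b)) :
    b ∈ L :=
  hL.mp a b ha (hL.taut _ ⟨hL.inSig a ha, hb⟩ h)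

theorem mem_of_taut₂ {a b c : MForm I} (ha : a ∈ L) (hb : b ∈ L) (hc : UsesOnly S c)
    (h : IsTaut (a.imp (b.imp c))) : c ∈ L :=
  hL.mp b c hb (hL.mem_of_taut ha ⟨hL.inSig b hb, hc⟩ h)

theorem conj_mem {a b : MForm I} (ha : a ∈ L) (hb : b ∈ L) : conj a b ∈ L :=
  hL.mem_of_taut₂ ha hb ((hL.inSig a ha).conj (hL.inSig b hb))
    (isTaut_iff.2 fun _ hv => by simp only [hv.imp_iff, hv.conj_iff]; tauto)

theorem bigConj_mem {l : List (MForm I)} (h : ∀ a ∈ l, a ∈ L) : bigConj l ∈ L := by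
  induction l with
  | nil =>
    exact hL.taut _ (UsesOnly.neg trivial)
      (isTaut_iff.2 fun _ hv => (hv.neg_iff _).2 hv.not_fls)
  | cons a t ih =>
    exact hL.conj_mem (h a List.mem_cons_self) (ih fun b hb => h b (List.mem_cons_of_mem a hb))

end IsNormalIn

section Fusion

variable {I J : Type} {Ls : J → Set (MForm I)}

theorem isNormalIn_fusionLogic : IsNormalIn Set.univ (FusionLogic Ls) where
  inSig φ _ := usesOnly_univ φ
  taut φ h ht _ hL := hL.1.taut φ h ht
  axK i hi a b ha hb _ hL := hL.1.axK i hi a b ha hb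
  mp a b ha hab L hL := hL.1.mp a b (ha L hL) (hab L hL)
  nec i hi a ha L hL := hL.1.nec i hi a (ha L hL)
  subst σ hσ a ha L hL := hL.1.subst σ hσ a (ha L hL)

theorem subset_fusionLogic (j : J) : Ls j ⊆ FusionLogic Ls :=
  fun _ hφ _ hL => hL.2 j hφ

theorem fusionLogic_subset {L : Set (MForm I)} (hL : IsNormalIn Set.univ L)
    (h : ∀ j, Ls j ⊆ L) : FusionLogic Ls ⊆ L :=
  fun _ hφ => hφ L ⟨hL, h⟩

theorem isNormalIn_valid {W : Type} (R : I → W → W → Prop) :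
    IsNormalIn Set.univ {φ : MForm I | ∀ V w, w ∈ semM R V φ} where
  inSig φ _ := usesOnly_univ φ
  taut _ _ ht V w := isTaut_iff.1 ht _ (isBoolVal_semM R V w)
  axK _ _ _ _ _ _ _ _ hab ha v hv := hab v hv (ha v hv)
  mp _ _ ha hab V w := hab V w (ha V w)
  nec _ _ _ ha V _ v _ := ha V v
  subst σ _ a ha V w := by
    show w ∈ semM R V (a.substP σ)
    rw [semM_substP]; exact ha _ w

theorem valid_of_mem_fusionLogic {W : Type} {R : I → W → W → Prop}
    (h : ∀ j, ∀ φ ∈ Ls j, ∀ V w, w ∈ semM R V φ) {φ : MForm I}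
    (hφ : φ ∈ FusionLogic Ls) :
    ∀ V w, w ∈ semM R V φ :=
  fusionLogic_subset (isNormalIn_valid R) h hφ

end Fusion

/-- In the quotient by indistinguishability every set of worlds pulls back to a definable
set, so validity under arbitrary valuations follows from closure under substitution. -/
theorem IsNormalIn.exists_finite_frame {I : Type} {S : Set I} {L : Set (MForm I)}
    (hL : IsNormalIn S L) (hfmp : HasFMP S L) {χ : MForm I} (hχ : UsesOnly S χ)
    (hχL : χ ∉ L) :
    ∃ (W : Type) (_ : Finite W) (R : I → W → W → Prop) (U : ℕ → Set W) (w : W),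
      (∀ φ ∈ L, ∀ V w, w ∈ semM R V φ) ∧ w ∉ semM R U χ := by
  obtain ⟨W₀, _, R₀, V₀, hvalid, w₀, hw₀⟩ := hfmp χ hχ hχL
  refine ⟨Refinement S R₀ V₀, Quotient.finite _, refinementRel S R₀ V₀,
    fun p => Quotient.mk _ '' V₀ p, ⟦w₀⟧, fun φ hφ U w => ?_, ?_⟩
  · obtain ⟨x, rfl⟩ := Quotient.mk_surjective w
    obtain ⟨θ, hθS, hθ⟩ := exists_subst_of_refinement U
    rw [mk_mem_semM_refinement_iff U φ (hL.inSig φ hφ), hθ]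
    exact hvalid _ (hL.subst θ hθS φ hφ) x
  · rw [mk_mem_semM_refinement_iff _ χ hχ]
    have hV : (fun p => Quotient.mk _ ⁻¹' (Quotient.mk _ '' V₀ p)) = V₀ :=
      funext fun p => (definableSets S R₀ V₀).preimage_mk_image_mk ⟨prop p, trivial, rfl⟩
    rwa [hV]

/-- Finite pointed models are taken on the naturals below `size`, so that the worlds of the
tree built from them are lists of natural numbers. -/
structure NatModel (I : Type) where
  size : ℕ
  root : ℕ
  R : I → ℕ → ℕ → Prop
  V : ℕ → Set ℕ
  root_lt : root < size
  lt_size_of_R : ∀ i u v, R i u v → v < size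

namespace NatModel

variable {I : Type}

def Validates (M : NatModel I) (L : Set (MForm I)) : Prop :=
  ∀ φ ∈ L, ∀ V, ∀ v < M.size, v ∈ semM M.R V φ

theorem exists_of_finite {W : Type} [Finite W] (R : I → W → W → Prop) (U : ℕ → Set W)
    (w : W) :
    ∃ M : NatModel I,
      (∀ φ, (∀ V x, x ∈ semM R V φ) → ∀ V, ∀ v < M.size, v ∈ semM M.R V φ) ∧
      ∀ φ, M.root ∈ semM M.R M.V φ ↔ w ∈ semM R U φ := by
  have := Fintype.ofFinite W
  let e := Fintype.equivFin W
  let g : W → ℕ := fun x => e x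
  have hg : g.Injective := fun x y h => e.injective (Fin.ext h)
  let M : NatModel I :=
    { size := Fintype.card W
      root := g w
      R := fun i a b => ∃ x y, g x = a ∧ g y = b ∧ R i x y
      V := fun p => g '' U p
      root_lt := (e w).2
      lt_size_of_R := by rintro i _ _ ⟨x, y, rfl, rfl, -⟩; exact (e y).2 }
  have key : ∀ V φ x, x ∈ semM R (fun p => g ⁻¹' V p) φ ↔ g x ∈ semM M.R V φ :=
    fun V φ x => semM_preimage_iff (S := Set.univ) (D := Set.univ)
      (fun _ _ _ _ _ _ => trivial) (fun _ _ x _ y h => ⟨x, y, rfl, rfl, h⟩)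
      (by rintro i _ x _ _ ⟨x', y, hx', rfl, h⟩; obtain rfl := hg hx'; exact ⟨y, h, rfl⟩)
      V φ (usesOnly_univ φ) x trivial
  refine ⟨M, fun φ hφ V v hv => ?_, fun φ => ?_⟩
  · obtain ⟨x, rfl⟩ : ∃ x, g x = v := ⟨e.symm ⟨v, hv⟩, by simp [g]⟩
    exact (key V φ x).1 (hφ _ x)
  · have hV : (fun p => g ⁻¹' M.V p) = U := funext fun p => Set.preimage_image_eq _ hg
    rw [← hV]
    exact (key M.V φ w).symm

end NatModel

theorem IsNormalIn.exists_natModel {I : Type} {S : Set I} {L : Set (MForm I)}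
    (hL : IsNormalIn S L) (hfmp : HasFMP S L) {α : MForm I} (hα : UsesOnly S α)
    (hαL : α.neg ∉ L) : ∃ M : NatModel I, M.Validates L ∧ M.root ∈ semM M.R M.V α := by
  obtain ⟨W, _, R, U, w, hvalid, hw⟩ := hL.exists_finite_frame hfmp hα.neg hαL
  obtain ⟨M, hM, hroot⟩ := NatModel.exists_of_finite R U w
  exact ⟨M, fun φ hφ => hM φ (hvalid φ hφ), (hroot α).2 (by simpa using hw)⟩

structure BlockDecomp (I W ι : Type) where
  model : ι → NatModel I
  blk : W → ι
  idx : W → ℕ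
  emb : ι → ℕ → W
  idx_lt : ∀ x, idx x < (model (blk x)).size
  emb_blk_idx : ∀ x, emb (blk x) (idx x) = x
  blk_idx_emb : ∀ x v, v < (model (blk x)).size →
    blk (emb (blk x) v) = blk x ∧ idx (emb (blk x) v) = v

namespace BlockDecomp

variable {I W ι : Type} (B : BlockDecomp I W ι)

def rel (i : I) (x y : W) : Prop :=
  B.blk x = B.blk y ∧ (B.model (B.blk x)).R i (B.idx x) (B.idx y)

theorem rel_iff {i : I} {x y : W} :
    B.rel i x y ↔ ∃ v, (B.model (B.blk x)).R i (B.idx x) v ∧ B.emb (B.blk x) v = y := by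
  constructor
  · rintro ⟨hb, hR⟩
    exact ⟨_, hR, hb ▸ B.emb_blk_idx y⟩
  · rintro ⟨v, hR, rfl⟩
    have hv := (B.model _).lt_size_of_R _ _ _ hR
    obtain ⟨hb, hi⟩ := B.blk_idx_emb x v hv
    exact ⟨hb.symm, by rwa [hi]⟩

theorem semM_iff {S : Set I} {R : I → W → W → Prop} (hR : ∀ i ∈ S, R i = B.rel i)
    (V : ℕ → Set W) (φ : MForm I) (hφ : UsesOnly S φ) (x : W) :
    x ∈ semM R V φ ↔
      B.idx x ∈ semM (B.model (B.blk x)).R (fun p => B.emb (B.blk x) ⁻¹' V p) φ := by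
  have key := semM_preimage_iff (R' := R) (g := B.emb (B.blk x))
    (D := {v | v < (B.model (B.blk x)).size})
    (fun i _ u _ v h => (B.model _).lt_size_of_R i u v h)
    (fun i hi u hu v h => by
      obtain ⟨hbu, hiu⟩ := B.blk_idx_emb x u hu
      obtain ⟨hbv, hiv⟩ := B.blk_idx_emb x v ((B.model _).lt_size_of_R i u v h)
      rw [hR i hi]
      exact ⟨hbu.trans hbv.symm, by rwa [hbu, hiu, hiv]⟩)
    (fun i hi u hu y h => by
      obtain ⟨hbu, hiu⟩ := B.blk_idx_emb x u hu
      rwa [hR i hi, B.rel_iff, hbu, hiu] at h)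
    V φ hφ (B.idx x) (B.idx_lt x)
  rwa [B.emb_blk_idx, Iff.comm] at key

theorem valid {S : Set I} {R : I → W → W → Prop} (hR : ∀ i ∈ S, R i = B.rel i)
    {L : Set (MForm I)} (hLS : ∀ φ ∈ L, UsesOnly S φ) (hM : ∀ b, (B.model b).Validates L) :
    ∀ φ ∈ L, ∀ V x, x ∈ semM R V φ :=
  fun φ hφ V x => (B.semM_iff hR V φ (hLS φ hφ) x).2 (hM _ φ hφ _ _ (B.idx_lt x))

end BlockDecomp

structure FusionData (I : Type) (n : ℕ) where
  c : I → Fin (n + 1)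
  L : Fin (n + 1) → Set (MForm I)
  normal : ∀ j, IsNormalIn {i | c i = j} (L j)
  fmp : ∀ j, HasFMP {i | c i = j} (L j)
  φ : MForm I
  not_mem : φ ∉ FusionLogic L

namespace FusionData

open scoped Classical

variable {I : Type} {n : ℕ} (F : FusionData I n)

def lits : List (MForm I) := (subformulas F.φ).filter isLit

def boxes : List (MForm I) := (subformulas F.φ).filter isBox

def fresh : ℕ := maxProp F.φ + 1

def deg : ℕ := depth F.φ

theorem mem_lits {b : MForm I} : b ∈ F.lits ↔ b ∈ subformulas F.φ ∧ isLit b := by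
  simp [lits]

noncomputable def surr (k : Fin (n + 1)) : MForm I → MForm I
  | prop p => prop p
  | fls => fls
  | imp a b => imp (surr k a) (surr k b)
  | box i a => if F.c i = k then box i (surr k a) else prop (F.fresh + F.boxes.idxOf (box i a))

noncomputable def unsurr (q : ℕ) : MForm I :=
  if q < F.fresh then prop q else F.boxes.getD (q - F.fresh) (prop q)

theorem isImpHom_surr (k : Fin (n + 1)) : IsImpHom (F.surr k) := ⟨rfl, fun _ _ => rfl⟩

theorem usesOnly_surr (k : Fin (n + 1)) : ∀ ψ, UsesOnly {i | F.c i = k} (F.surr k ψ)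
  | prop _ | fls => trivial
  | imp a b => ⟨usesOnly_surr k a, usesOnly_surr k b⟩
  | box i a => by
    unfold surr
    split_ifs with h
    · exact ⟨h, usesOnly_surr k a⟩
    · trivial

theorem substP_unsurr_surr {k : Fin (n + 1)} :
    ∀ {ψ : MForm I}, ψ ∈ subformulas F.φ → (F.surr k ψ).substP F.unsurr = ψ
  | prop p, h => by simp [surr, substP, unsurr, fresh, Nat.lt_succ_of_le (le_maxProp h)]
  | fls, _ => rfl
  | imp a b, h => by
    simp only [surr, substP, substP_unsurr_surr (imp_left_mem h),
      substP_unsurr_surr (imp_right_mem h)]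
  | box i a, h => by
    unfold surr
    split_ifs
    · simp only [substP, substP_unsurr_surr (box_arg_mem h)]
    · have hb : box i a ∈ F.boxes := List.mem_filter.2 ⟨h, rfl⟩
      have hq : ¬ F.fresh + F.boxes.idxOf (box i a) < F.fresh := by omega
      simp [substP, unsurr, hq, List.getD_eq_getElem?_getD, hb]

noncomputable def desc (D : List (MForm I)) : MForm I :=
  bigConj (F.lits.map fun b => if b ∈ D then b else b.neg)

theorem substP_unsurr_surr_desc (k : Fin (n + 1)) (D : List (MForm I)) :
    (F.surr k (F.desc D)).substP F.unsurr = F.desc D := by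
  have h := (F.isImpHom_surr k).comp (isImpHom_substP F.unsurr)
  change (substP F.unsurr ∘ F.surr k) (F.desc D) = F.desc D
  rw [desc, h.map_bigConj, List.map_map]
  refine congrArg bigConj (List.map_congr_left fun b hb => ?_)
  have hb' := F.substP_unsurr_surr (k := k) (F.mem_lits.1 hb).1
  simp only [Function.comp_apply] at hb' h ⊢
  split_ifs
  · exact hb'
  · exact (h.map_neg b).trans (congrArg _ hb')

def Consistent (D : List (MForm I)) : Prop := (F.desc D).neg ∉ FusionLogic F.L

section BoolVal

variable {F} {val : MForm I → Prop} (hv : IsBoolVal val)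
include hv

theorem desc_filter : val (F.desc (F.lits.filter fun b => val b)) := by
  refine (hv.bigConj_iff _).2 fun a ha => ?_
  obtain ⟨b, hbL, rfl⟩ := List.mem_map.1 ha
  split_ifs with hb
  · simpa using (List.mem_filter.1 hb).2
  · exact (hv.neg_iff b).2 fun hvb => hb (List.mem_filter.2 ⟨hbL, by simpa using hvb⟩)

theorem mem_iff_of_desc {D : List (MForm I)} (h : val (F.desc D)) :
    ∀ b ∈ F.lits, val b ↔ b ∈ D := by
  intro b hb
  have := (hv.bigConj_iff _).1 h _ (List.mem_map_of_mem hb)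
  split_ifs at this with hbD
  · exact iff_of_true this hbD
  · exact iff_of_false ((hv.neg_iff b).1 this) hbD

theorem iff_evalDesc {D : List (MForm I)} (h : ∀ b ∈ F.lits, val b ↔ b ∈ D) {ψ : MForm I}
    (hψ : ψ ∈ subformulas F.φ) : val ψ ↔ evalDesc D ψ :=
  hv.iff_evalDesc ψ fun b hb hlit => h b (F.mem_lits.2 ⟨mem_subformulas_trans hb hψ, hlit⟩)

end BoolVal

/-- Some consistent description makes `φ` false: otherwise `φ` would follow propositionally
from the fusion-provable implications `desc D → φ`. -/
theorem exists_refuting_desc :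
    ∃ D ∈ F.lits.sublists, F.Consistent D ∧ ¬ evalDesc D F.φ := by
  by_contra! h
  have hF := isNormalIn_fusionLogic (Ls := F.L)
  have himp : ∀ D ∈ F.lits.sublists, (F.desc D).imp F.φ ∈ FusionLogic F.L := by
    intro D hD
    by_cases hc : F.Consistent D
    · refine hF.taut _ (usesOnly_univ _) (isTaut_iff.2 fun val hv => (hv.imp_iff _ _).2 ?_)
      exact fun hd => (iff_evalDesc hv (mem_iff_of_desc hv hd) (self_mem_subformulas _)).2
        (h D hD hc)
    · refine hF.mem_of_taut (not_not.1 hc) (usesOnly_univ _) (isTaut_iff.2 fun val hv => ?_)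
      simp only [hv.imp_iff, hv.neg_iff]
      tauto
  refine F.not_mem (hF.mem_of_taut (hF.bigConj_mem (l := F.lits.sublists.map fun D =>
    (F.desc D).imp F.φ) (by simpa using himp)) (usesOnly_univ _) (isTaut_iff.2 fun val hv => ?_))
  rw [hv.imp_iff, hv.bigConj_iff]
  intro hall
  refine (hv.imp_iff _ _).1 (hall _ (List.mem_map.2 ⟨_, ?_, rfl⟩)) (desc_filter hv)
  exact List.mem_sublists.2 List.filter_sublist

noncomputable def rootDesc : List (MForm I) := F.exists_refuting_desc.choose

theorem rootDesc_mem_sublists : F.rootDesc ∈ F.lits.sublists :=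
  F.exists_refuting_desc.choose_spec.1

theorem consistent_rootDesc : F.Consistent F.rootDesc := F.exists_refuting_desc.choose_spec.2.1

theorem not_evalDesc_rootDesc : ¬ evalDesc F.rootDesc F.φ :=
  F.exists_refuting_desc.choose_spec.2.2

noncomputable def consAx (k : Fin (n + 1)) : MForm I :=
  bigConj ((F.lits.sublists.filter fun D => ¬ F.Consistent D).map
    fun D => (F.surr k (F.desc D)).neg)

noncomputable def consAxIter (k : Fin (n + 1)) : ℕ → MForm I
  | 0 => F.consAx k
  | m + 1 => conj (consAxIter k m)
      (bigConj (((mods F.φ).filter (F.c · = k)).map fun i => box i (consAxIter k m)))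

noncomputable def rootFormula (k : Fin (n + 1)) (D : List (MForm I)) : MForm I :=
  conj (F.surr k (F.desc D)) (F.consAxIter k F.deg)

theorem usesOnly_consAxIter (k : Fin (n + 1)) :
    ∀ m, UsesOnly {i | F.c i = k} (F.consAxIter k m)
  | 0 => UsesOnly.bigConj fun a ha => by
    obtain ⟨D, -, rfl⟩ := List.mem_map.1 ha
    exact (F.usesOnly_surr k _).neg
  | m + 1 => (usesOnly_consAxIter k m).conj <| UsesOnly.bigConj fun a ha => by
    obtain ⟨i, hi, rfl⟩ := List.mem_map.1 ha
    exact ⟨by simpa using (List.mem_filter.1 hi).2, usesOnly_consAxIter k m⟩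

theorem substP_consAxIter_mem (k : Fin (n + 1)) (m : ℕ) :
    (F.consAxIter k m).substP F.unsurr ∈ FusionLogic F.L := by
  have hF := isNormalIn_fusionLogic (Ls := F.L)
  have hσ := isImpHom_substP F.unsurr
  induction m with
  | zero =>
    rw [consAxIter, consAx, hσ.map_bigConj, List.map_map]
    refine hF.bigConj_mem fun a ha => ?_
    obtain ⟨D, hD, rfl⟩ := List.mem_map.1 ha
    simp only [Function.comp_apply, hσ.map_neg, substP_unsurr_surr_desc]
    simpa [Consistent] using (List.mem_filter.1 hD).2
  | succ m ih =>
    rw [consAxIter, hσ.map_conj, hσ.map_bigConj, List.map_map]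
    refine hF.conj_mem ih (hF.bigConj_mem fun a ha => ?_)
    obtain ⟨i, -, rfl⟩ := List.mem_map.1 ha
    exact hF.nec i trivial _ ih

theorem neg_rootFormula_not_mem {D : List (MForm I)} (hD : F.Consistent D) (k : Fin (n + 1)) :
    (F.rootFormula k D).neg ∉ F.L k := fun h => hD <| by
  have hF := isNormalIn_fusionLogic (Ls := F.L)
  have hσ := isImpHom_substP F.unsurr
  have h' := hF.subst F.unsurr (fun _ => usesOnly_univ _) _ (subset_fusionLogic k h)
  rw [hσ.map_neg, rootFormula, hσ.map_conj, substP_unsurr_surr_desc] at h'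
  refine hF.mem_of_taut₂ h' (F.substP_consAxIter_mem k F.deg) (usesOnly_univ _) ?_
  exact isTaut_iff.2 fun _ hv => by simp only [hv.imp_iff, hv.neg_iff, hv.conj_iff]; tauto

theorem exists_comp (k : Fin (n + 1)) (D : List (MForm I)) :
    ∃ M : NatModel I, M.Validates (F.L k) ∧
      (F.Consistent D → M.root ∈ semM M.R M.V (F.rootFormula k D)) := by
  have hα : ∀ D, UsesOnly {i | F.c i = k} (F.rootFormula k D) :=
    fun D => (F.usesOnly_surr k _).conj (F.usesOnly_consAxIter k _)
  by_cases hD : F.Consistent D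
  · obtain ⟨M, hM, hroot⟩ :=
      (F.normal k).exists_natModel (F.fmp k) (hα D) (F.neg_rootFormula_not_mem hD k)
    exact ⟨M, hM, fun _ => hroot⟩
  · obtain ⟨M, hM, -⟩ := (F.normal k).exists_natModel (F.fmp k) (hα F.rootDesc)
      (F.neg_rootFormula_not_mem F.consistent_rootDesc k)
    exact ⟨M, hM, fun h => absurd h hD⟩

noncomputable def comp (k : Fin (n + 1)) (D : List (MForm I)) : NatModel I :=
  (F.exists_comp k D).choose

theorem comp_validates (k : Fin (n + 1)) (D : List (MForm I)) : (F.comp k D).Validates (F.L k) :=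
  (F.exists_comp k D).choose_spec.1

theorem root_mem_rootFormula {k : Fin (n + 1)} {D : List (MForm I)} (hD : F.Consistent D) :
    (F.comp k D).root ∈ semM (F.comp k D).R (F.comp k D).V (F.rootFormula k D) :=
  (F.exists_comp k D).choose_spec.2 hD

section Semantics

variable {W : Type} {R : I → W → W → Prop} {V : ℕ → Set W} {k : Fin (n + 1)}

theorem isBoolVal_surr (w : W) : IsBoolVal fun ψ => w ∈ semM R V (F.surr k ψ) :=
  (isBoolVal_semM R V w).comp (F.isImpHom_surr k)

theorem mem_consAxIter_mono {w : W} {m m' : ℕ} (h : m ≤ m')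
    (hw : w ∈ semM R V (F.consAxIter k m')) : w ∈ semM R V (F.consAxIter k m) := by
  induction h with
  | refl => exact hw
  | step _ ih => exact ih (mem_semM_conj.1 hw).1

theorem mem_consAxIter_of_rel {u v : W} {i : I} {m : ℕ}
    (hu : u ∈ semM R V (F.consAxIter k (m + 1))) (hi : i ∈ mods F.φ) (hik : F.c i = k)
    (huv : R i u v) : v ∈ semM R V (F.consAxIter k m) := by
  refine mem_semM_bigConj.1 (mem_semM_conj.1 hu).2 (box i _) ?_ v huv
  exact List.mem_map.2 ⟨i, List.mem_filter.2 ⟨hi, by simpa using hik⟩, rfl⟩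

noncomputable def descOf (k : Fin (n + 1)) (R : I → W → W → Prop) (V : ℕ → Set W)
    (w : W) : List (MForm I) :=
  F.lits.filter fun b => w ∈ semM R V (F.surr k b)

theorem mem_descOf {w : W} {b : MForm I} :
    b ∈ F.descOf k R V w ↔ b ∈ F.lits ∧ w ∈ semM R V (F.surr k b) := by
  simp [descOf]

theorem descOf_mem_sublists (w : W) : F.descOf k R V w ∈ F.lits.sublists :=
  List.mem_sublists.2 List.filter_sublist

theorem consistent_descOf {w : W} {m : ℕ} (hw : w ∈ semM R V (F.consAxIter k m)) :
    F.Consistent (F.descOf k R V w) := by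
  by_contra hc
  have hw0 := F.mem_consAxIter_mono (Nat.zero_le m) hw
  refine mem_semM_neg.1 (mem_semM_bigConj.1 hw0 _ (List.mem_map.2 ⟨_, ?_, rfl⟩))
    (desc_filter (F.isBoolVal_surr w))
  exact List.mem_filter.2 ⟨F.descOf_mem_sublists w, by simpa [descOf] using hc⟩

theorem mem_semM_surr_iff_evalDesc {w : W} {D : List (MForm I)}
    (h : ∀ b ∈ F.lits, w ∈ semM R V (F.surr k b) ↔ b ∈ D) {ψ : MForm I}
    (hψ : ψ ∈ subformulas F.φ) : w ∈ semM R V (F.surr k ψ) ↔ evalDesc D ψ :=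
  iff_evalDesc (F.isBoolVal_surr w) h hψ

end Semantics

theorem root_mem_surr_iff {k : Fin (n + 1)} {D : List (MForm I)} (hD : F.Consistent D)
    {b : MForm I} (hb : b ∈ F.lits) :
    (F.comp k D).root ∈ semM (F.comp k D).R (F.comp k D).V (F.surr k b) ↔ b ∈ D :=
  mem_iff_of_desc (F.isBoolVal_surr _) (mem_semM_conj.1 (F.root_mem_rootFormula hD)).1 b hb

theorem root_mem_consAxIter {k : Fin (n + 1)} {D : List (MForm I)} (hD : F.Consistent D)
    {m : ℕ} (hm : m ≤ F.deg) :
    (F.comp k D).root ∈ semM (F.comp k D).R (F.comp k D).V (F.consAxIter k m) :=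
  F.mem_consAxIter_mono hm (mem_semM_conj.1 (F.root_mem_rootFormula hD)).2

def creator (p : List (Fin (n + 1) × ℕ)) : Option (Fin (n + 1)) := p.head?.map Prod.fst

/-- A path lists, last step first, the worlds `u` entered in the components of colour `k`
attached along the way; it ends at a world whose description is `pathDesc`. -/
noncomputable def pathDesc : List (Fin (n + 1) × ℕ) → List (MForm I)
  | [] => F.rootDesc
  | (k, u) :: t => F.descOf k (F.comp k (pathDesc t)).R (F.comp k (pathDesc t)).V u

/-- A component of colour `k` is attached at the end of `t`. -/
def Opens (k : Fin (n + 1)) (t : List (Fin (n + 1) × ℕ)) : Prop :=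
  creator t ≠ some k ∧ t.length < F.deg

def IsPath : List (Fin (n + 1) × ℕ) → Prop
  | [] => True
  | (k, u) :: t => IsPath t ∧ F.Opens k t ∧ u ≠ (F.comp k (F.pathDesc t)).root ∧
      u < (F.comp k (F.pathDesc t)).size

theorem pathDesc_mem_sublists : ∀ t, F.pathDesc t ∈ F.lits.sublists
  | [] => F.rootDesc_mem_sublists
  | (_, _) :: _ => F.descOf_mem_sublists _

theorem IsPath.tail {p : List (Fin (n + 1) × ℕ)} (hp : F.IsPath p) : F.IsPath p.tail := by
  cases p with
  | nil => trivial
  | cons s t => exact hp.1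

theorem IsPath.length_le : ∀ {p : List (Fin (n + 1) × ℕ)}, F.IsPath p → p.length ≤ F.deg
  | [], _ => Nat.zero_le _
  | (_, _) :: _, hp => hp.2.1.2

noncomputable def sizeBound : ℕ :=
  (Finset.univ ×ˢ F.lits.sublists.toFinset).sup fun x => (F.comp x.1 x.2).size

theorem IsPath.lt_sizeBound :
    ∀ {p : List (Fin (n + 1) × ℕ)}, F.IsPath p → ∀ s ∈ p, s.2 < F.sizeBound
  | [], _, _, hs => by cases hs
  | (k, u) :: t, hp, s, hs => by
    rcases List.mem_cons.1 hs with rfl | hs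
    · refine hp.2.2.2.trans_le ?_
      refine Finset.le_sup (f := fun x : Fin (n + 1) × List (MForm I) => (F.comp x.1 x.2).size)
        (b := (k, F.pathDesc t)) ?_
      exact Finset.mem_product.2
        ⟨Finset.mem_univ _, List.mem_toFinset.2 (F.pathDesc_mem_sublists t)⟩
    · exact IsPath.lt_sizeBound hp.1 s hs

theorem finite_isPath : {p | F.IsPath p}.Finite := by
  refine ((List.finite_length_le (Fin (n + 1) × Fin F.sizeBound) F.deg).image
    (List.map fun s : Fin (n + 1) × Fin F.sizeBound => (s.1, (s.2 : ℕ)))).subset fun p hp => ?_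
  refine ⟨p.pmap (fun (s : Fin (n + 1) × ℕ) (hs : s.2 < F.sizeBound) => (s.1, ⟨s.2, hs⟩))
    (IsPath.lt_sizeBound F hp), ?_, ?_⟩
  · simpa using IsPath.length_le F hp
  · simp [List.map_pmap]

abbrev TreePath : Type := {p // F.IsPath p}

instance : Finite F.TreePath := F.finite_isPath.to_subtype

abbrev Copies : Type := ∀ l, Fin (F.comp l F.rootDesc).size

abbrev World : Type := F.Copies × F.TreePath

def parent (p : F.TreePath) : F.TreePath := ⟨p.1.tail, IsPath.tail F p.2⟩

/-- The world `v` of the `k`-component attached at `b`, whose root is `b` itself. -/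
noncomputable def node (b : F.World) (k : Fin (n + 1)) (v : ℕ) : F.World :=
  if h : F.IsPath ((k, v) :: b.2.1) then (b.1, ⟨_, h⟩) else b

/-- The world lies in a component of colour `k`, rather than being a `k`-leaf. -/
def InTree (k : Fin (n + 1)) (x : F.World) : Prop :=
  creator x.2.1 = some k ∨ x.2.1.length < F.deg

noncomputable def leafRoot (k : Fin (n + 1)) : Fin (F.comp k F.rootDesc).size :=
  ⟨_, (F.comp k F.rootDesc).root_lt⟩

/-- The `k`-block of `x`: the node to which its `k`-component is attached or, for a
`k`-leaf, the copy of `comp k rootDesc` formed by the copies of `x` differing in coordinate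
`k`. -/
noncomputable def blk (k : Fin (n + 1)) (x : F.World) : F.World :=
  if creator x.2.1 = some k then (x.1, F.parent x.2)
  else if x.2.1.length < F.deg then x
  else (Function.update x.1 k (F.leafRoot k), x.2)

noncomputable def idx (k : Fin (n + 1)) (x : F.World) : ℕ :=
  if creator x.2.1 = some k then (x.2.1.head?.map Prod.snd).getD 0
  else if x.2.1.length < F.deg then (F.comp k (F.pathDesc x.2.1)).root
  else x.1 k

noncomputable def blockModel (k : Fin (n + 1)) (b : F.World) : NatModel I :=
  if b.2.1.length < F.deg then F.comp k (F.pathDesc b.2.1) else F.comp k F.rootDesc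

noncomputable def emb (k : Fin (n + 1)) (b : F.World) (v : ℕ) : F.World :=
  if b.2.1.length < F.deg then F.node b k v
  else if h : v < (F.comp k F.rootDesc).size then (Function.update b.1 k ⟨v, h⟩, b.2) else b

section Tree

variable {F} {k : Fin (n + 1)} {b : F.World} {v : ℕ}

theorem node_of_ne (hb : F.Opens k b.2.1) (hv : v < (F.comp k (F.pathDesc b.2.1)).size)
    (hne : v ≠ (F.comp k (F.pathDesc b.2.1)).root) :
    F.node b k v = (b.1, ⟨(k, v) :: b.2.1, b.2.2, hb, hne, hv⟩) :=
  dif_pos _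

theorem node_root : F.node b k (F.comp k (F.pathDesc b.2.1)).root = b :=
  dif_neg fun h => h.2.2.1 rfl

theorem blk_node (hb : F.Opens k b.2.1) (hv : v < (F.comp k (F.pathDesc b.2.1)).size) :
    F.blk k (F.node b k v) = b ∧ F.idx k (F.node b k v) = v := by
  by_cases hne : v = (F.comp k (F.pathDesc b.2.1)).root
  · subst hne
    rw [node_root]
    simp [blk, idx, hb.1, hb.2]
  · rw [node_of_ne hb hv hne]
    simp [blk, idx, creator, parent]

theorem blk_idx_of_inTree {x : F.World} (h : F.InTree k x) :
    F.Opens k (F.blk k x).2.1 ∧ F.idx k x < (F.comp k (F.pathDesc (F.blk k x).2.1)).size ∧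
      F.node (F.blk k x) k (F.idx k x) = x := by
  by_cases hk : creator x.2.1 = some k
  · obtain ⟨a, ⟨_ | ⟨⟨k', u⟩, t⟩, hp⟩⟩ := x
    · cases hk
    · obtain rfl : k' = k := Option.some.inj hk
      simp only [blk, idx, hk, if_true]
      exact ⟨hp.2.1, hp.2.2.2, dif_pos hp⟩
  · have hlen : x.2.1.length < F.deg := h.resolve_left hk
    simp only [blk, idx, hk, hlen, if_false, if_true]
    exact ⟨⟨hk, hlen⟩, (F.comp k _).root_lt, node_root⟩

theorem opens_blk {x : F.World} (h : F.InTree k x) : F.Opens k (F.blk k x).2.1 :=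
  (blk_idx_of_inTree h).1

end Tree

theorem blockModel_of_opens {k : Fin (n + 1)} {b : F.World} (hb : F.Opens k b.2.1) :
    F.blockModel k b = F.comp k (F.pathDesc b.2.1) :=
  if_pos hb.2

theorem emb_of_opens {k : Fin (n + 1)} {b : F.World} (hb : F.Opens k b.2.1) (v : ℕ) :
    F.emb k b v = F.node b k v :=
  if_pos hb.2

section Leaf

variable {F} {k : Fin (n + 1)} {x : F.World} (h : ¬ F.InTree k x)
include h

theorem blk_of_not_inTree :
    F.blk k x = (Function.update x.1 k (F.leafRoot k), x.2) ∧ F.idx k x = x.1 k := by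
  rw [InTree, not_or] at h
  simp [blk, idx, h.1, h.2]

theorem blockModel_blk_of_not_inTree : F.blockModel k (F.blk k x) = F.comp k F.rootDesc := by
  have h' := h
  rw [InTree, not_or] at h'
  simp [(blk_of_not_inTree h).1, blockModel, h'.2]

theorem emb_blk_of_not_inTree {v : ℕ} (hv : v < (F.comp k F.rootDesc).size) :
    F.emb k (F.blk k x) v = (Function.update x.1 k ⟨v, hv⟩, x.2) := by
  have h' := h
  rw [InTree, not_or] at h'
  simp [(blk_of_not_inTree h).1, emb, h'.2, hv]

end Leaf

noncomputable def blocks (k : Fin (n + 1)) : BlockDecomp I F.World F.World where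
  model := F.blockModel k
  blk := F.blk k
  idx := F.idx k
  emb := F.emb k
  idx_lt x := by
    by_cases h : F.InTree k x
    · rw [blockModel_of_opens F (opens_blk h)]
      exact (blk_idx_of_inTree h).2.1
    · rw [blockModel_blk_of_not_inTree h, (blk_of_not_inTree h).2]
      exact (x.1 k).2
  emb_blk_idx x := by
    by_cases h : F.InTree k x
    · rw [emb_of_opens F (opens_blk h)]
      exact (blk_idx_of_inTree h).2.2
    · rw [(blk_of_not_inTree h).2, emb_blk_of_not_inTree h (x.1 k).2]
      simp
  blk_idx_emb x v hv := by
    by_cases h : F.InTree k x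
    · rw [blockModel_of_opens F (opens_blk h)] at hv
      rw [emb_of_opens F (opens_blk h)]
      exact blk_node (opens_blk h) hv
    · rw [blockModel_blk_of_not_inTree h] at hv
      have hleaf := blk_of_not_inTree (x := (Function.update x.1 k ⟨v, hv⟩, x.2)) h
      rw [emb_blk_of_not_inTree h hv, hleaf.1, hleaf.2, (blk_of_not_inTree h).1]
      simp

noncomputable def rel (i : I) : F.World → F.World → Prop := (F.blocks (F.c i)).rel i

def val (q : ℕ) : Set F.World := {x | prop q ∈ F.pathDesc x.2.1}

theorem valid_of_mem_L (j : Fin (n + 1)) : ∀ φ ∈ F.L j, ∀ V x, x ∈ semM F.rel V φ := by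
  refine (F.blocks j).valid (S := {i | F.c i = j}) (fun i hi => ?_) (F.normal j).inSig
    fun b => ?_
  · rw [rel, show F.c i = j from hi]
  · change (F.blockModel j b).Validates _
    unfold blockModel
    split_ifs <;> exact F.comp_validates _ _

theorem rel_iff_node {i : I} {x y : F.World} (h : F.InTree (F.c i) x) :
    F.rel i x y ↔ ∃ v, (F.comp (F.c i) (F.pathDesc (F.blk (F.c i) x).2.1)).R i
      (F.idx (F.c i) x) v ∧ F.node (F.blk (F.c i) x) (F.c i) v = y := by
  rw [rel, BlockDecomp.rel_iff]
  show (∃ v, (F.blockModel (F.c i) (F.blk (F.c i) x)).R i (F.idx (F.c i) x) v ∧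
    F.emb (F.c i) (F.blk (F.c i) x) v = y) ↔ _
  simp only [blockModel_of_opens F (opens_blk h), emb_of_opens F (opens_blk h)]

def SafePath : List (Fin (n + 1) × ℕ) → ℕ → Prop
  | [], _ => True
  | (k, u) :: t, m => SafePath t m ∧
      u ∈ semM (F.comp k (F.pathDesc t)).R (F.comp k (F.pathDesc t)).V (F.consAxIter k m)

/-- Every world within `m` steps of `x` lies in the tree and carries a consistent
description. -/
def Safe (x : F.World) (m : ℕ) : Prop := F.SafePath x.2.1 m ∧ x.2.1.length + m ≤ F.deg

theorem SafePath.mono {m m' : ℕ} (h : m ≤ m') :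
    ∀ {t : List (Fin (n + 1) × ℕ)}, F.SafePath t m' → F.SafePath t m
  | [], _ => trivial
  | (_, _) :: _, ht => ⟨SafePath.mono h ht.1, F.mem_consAxIter_mono h ht.2⟩

theorem SafePath.consistent {m : ℕ} :
    ∀ {t : List (Fin (n + 1) × ℕ)}, F.SafePath t m → F.Consistent (F.pathDesc t)
  | [], _ => F.consistent_rootDesc
  | (_, _) :: _, ht => F.consistent_descOf ht.2

section Safe

variable {F} {x : F.World} {m : ℕ}

theorem Safe.mono {m' : ℕ} (hx : F.Safe x m') (h : m ≤ m') : F.Safe x m :=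
  ⟨SafePath.mono F h hx.1, by have := hx.2; omega⟩

theorem Safe.inTree (hx : F.Safe x (m + 1)) (k : Fin (n + 1)) : F.InTree k x :=
  Or.inr (by have := hx.2; omega)

theorem Safe.blk {k : Fin (n + 1)} (hx : F.Safe x m) (h : F.InTree k x) :
    F.SafePath (F.blk k x).2.1 m ∧ (F.blk k x).2.1.length ≤ x.2.1.length ∧
      F.idx k x ∈ semM (F.comp k (F.pathDesc (F.blk k x).2.1)).R
        (F.comp k (F.pathDesc (F.blk k x).2.1)).V (F.consAxIter k m) := by
  obtain ⟨a, ⟨p, hp⟩⟩ := x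
  by_cases hk : creator p = some k
  · obtain ⟨⟨k', u⟩, t, rfl⟩ : ∃ s t, p = s :: t := List.exists_cons_of_ne_nil
      (by rintro rfl; cases hk)
    obtain rfl : k' = k := Option.some.inj hk
    simp only [FusionData.blk, FusionData.idx, hk, if_true]
    exact ⟨hx.1.1, by simp [parent], hx.1.2⟩
  · have hlen : p.length < F.deg := h.resolve_left hk
    simp only [FusionData.blk, FusionData.idx, hk, hlen, if_false, if_true]
    exact ⟨hx.1, le_rfl,
      F.root_mem_consAxIter (SafePath.consistent F hx.1) (by have := hx.2; omega)⟩

theorem safe_node {i : I} {v : ℕ} (hx : F.Safe x (m + 1)) (hi : i ∈ mods F.φ)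
    (hv : (F.comp (F.c i) (F.pathDesc (F.blk (F.c i) x).2.1)).R i (F.idx (F.c i) x) v) :
    F.Safe (F.node (F.blk (F.c i) x) (F.c i) v) m := by
  obtain ⟨hanc, hlen, hidx⟩ := hx.blk (hx.inTree (F.c i))
  have hx2 := hx.2
  by_cases hroot : v = (F.comp (F.c i) (F.pathDesc (F.blk (F.c i) x).2.1)).root
  · rw [hroot, node_root]
    exact ⟨SafePath.mono F m.le_succ hanc, by omega⟩
  · rw [node_of_ne (opens_blk (hx.inTree _)) ((F.comp _ _).lt_size_of_R _ _ _ hv) hroot]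
    refine ⟨⟨SafePath.mono F m.le_succ hanc, F.mem_consAxIter_of_rel hidx hi rfl hv⟩, ?_⟩
    simp only [List.length_cons]
    omega

end Safe

section Node

variable {F} {k : Fin (n + 1)} {b : F.World} {v : ℕ} (hb : F.Opens k b.2.1)
  (hv : v < (F.comp k (F.pathDesc b.2.1)).size) (hc : F.Consistent (F.pathDesc b.2.1))
include hb hv hc

theorem mem_pathDesc_node {l : MForm I} (hl : l ∈ F.lits) :
    l ∈ F.pathDesc (F.node b k v).2.1 ↔
      v ∈ semM (F.comp k (F.pathDesc b.2.1)).R (F.comp k (F.pathDesc b.2.1)).V (F.surr k l) := by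
  by_cases hroot : v = (F.comp k (F.pathDesc b.2.1)).root
  · rw [hroot, node_root, F.root_mem_surr_iff hc hl]
  · rw [node_of_ne hb hv hroot]
    exact F.mem_descOf.trans (and_iff_right hl)

theorem evalDesc_node_iff {ψ : MForm I} (hψ : ψ ∈ subformulas F.φ) :
    evalDesc (F.pathDesc (F.node b k v).2.1) ψ ↔
      v ∈ semM (F.comp k (F.pathDesc b.2.1)).R (F.comp k (F.pathDesc b.2.1)).V (F.surr k ψ) :=
  (F.mem_semM_surr_iff_evalDesc (fun _ hl => (mem_pathDesc_node hb hv hc hl).symm) hψ).symm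

end Node

theorem mem_semM_iff_evalDesc {ψ : MForm I} (hψ : ψ ∈ subformulas F.φ) {x : F.World}
    (hx : F.Safe x (depth ψ)) :
    x ∈ semM F.rel F.val ψ ↔ evalDesc (F.pathDesc x.2.1) ψ := by
  induction ψ generalizing x with
  | prop _ | fls => rfl
  | imp a b iha ihb =>
    rw [mem_semM_imp, iha (imp_left_mem hψ) (hx.mono (le_max_left _ _)),
      ihb (imp_right_mem hψ) (hx.mono (le_max_right _ _))]
    rfl
  | box i β ih =>
    have hin := hx.inTree (F.c i)
    obtain ⟨hop, hidx, hnode⟩ := blk_idx_of_inTree hin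
    have hc := SafePath.consistent F (hx.blk hin).1
    have hrhs := evalDesc_node_iff hop hidx hc hψ
    rw [hnode] at hrhs
    rw [hrhs, surr, if_pos rfl, mem_semM_box, mem_semM_box]
    simp only [F.rel_iff_node hin, forall_exists_index, and_imp, forall_apply_eq_imp_iff₂]
    refine forall₂_congr fun v hv => ?_
    rw [ih (box_arg_mem hψ) (safe_node hx (mem_mods hψ) hv)]
    exact evalDesc_node_iff hop ((F.comp _ _).lt_size_of_R _ _ _ hv) hc
      (box_arg_mem hψ)

noncomputable def root : F.World := (F.leafRoot, ⟨[], trivial⟩)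

theorem root_not_mem : F.root ∉ semM F.rel F.val F.φ := fun h =>
  F.not_evalDesc_rootDesc ((F.mem_semM_iff_evalDesc (self_mem_subformulas _)
    ⟨by simp [root, SafePath], by simp [root, deg]⟩).1 h)

end FusionData

/-- If the normal modal logics `L_j` (in pairwise disjoint
signatures), each characterized by a class of Kripke frames, all have the
finite model property, then so does their fusion. -/
theorem fusion_fmp {I : Type} (n : ℕ) (c : I → Fin (n + 1))
    (Ls : Fin (n + 1) → Set (MForm I))
    (hnorm : ∀ j, IsNormalIn {i | c i = j} (Ls j))
    (hchar : ∀ j, ∃ Fs : Set (Frame {i : I // c i = j}),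
      CharacterizedBy c j (Ls j) Fs)
    (hfmp : ∀ j, HasFMP {i | c i = j} (Ls j)) :
    HasFMP Set.univ (FusionLogic Ls) := by
  intro φ _ hφ
  let F : FusionData I n := ⟨c, Ls, hnorm, hfmp, φ, hφ⟩
  exact ⟨F.World, inferInstance, F.rel, F.val,
    fun ψ hψ => valid_of_mem_fusionLogic F.valid_of_mem_L hψ F.val, F.root, F.root_not_mem⟩
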